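/- arXiv:1804.05035 — 7 statements merged into one kernel-verified Lean document; each statement's English description precedes it below -/
import Mathlib

section
/- Every ab-set on the real line is a regular system: if X ⊂ ℝ is a discrete set in which the distances between consecutive points alternate between two fixed positive values a and b, then the group of isometries of ℝ mapping X to itself acts transitively on X. -/
noncomputable section
open scoped Pointwise

/-- Euclidean d-space. -/
abbrev Euc (d : ℕ) : Type := EuclideanSpace ℝ (Fin d)

/-- The 1-based standard basis vector `e_k` of `ℝ^d` (for `1 ≤ k ≤ d`). -/
def eVec (d k : ℕ) : Euc d :=
  if h : k - 1 < d then EuclideanSpace.single ⟨k - 1, h⟩ (1 : ℝ) else 0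

/-- Conditions (A1)–(A3) on the doubly-infinite integer sequence `A`. -/
def EngelSeq (d : ℕ) (A : ℤ → ℤ) : Prop :=
  (∀ i : ℤ, 1 ≤ (A i).natAbs ∧ (A i).natAbs ≤ d - 1) ∧
  (∀ i : ℤ, (A (i + (d - 1))).natAbs = (A i).natAbs) ∧
  (∀ s : ℕ, 1 ≤ s → s ≤ d - 1 → ∃ i : ℤ, 1 ≤ i ∧ i ≤ d - 1 ∧ (A i).natAbs = s)

/-- The vector `u_i = sign(a_i) e_{|a_i|}`. -/
def engelU (d : ℕ) (A : ℤ → ℤ) (i : ℤ) : Euc d :=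
  (if 0 < A i then (1 : ℝ) else -1) • eVec d (A i).natAbs

/-- The cumulative sum `u_1 + ⋯ + u_i` (with the natural convention for `i ≤ 0`,
so that `engelCum 0 = 0` and `engelCum i - engelCum (i-1) = u_i` for all `i`). -/
def engelCum (d : ℕ) (A : ℤ → ℤ) (i : ℤ) : Euc d :=
  if 0 ≤ i then ∑ j ∈ Finset.range i.toNat, engelU d A ((j : ℤ) + 1)
  else -∑ j ∈ Finset.range (-i).toNat, engelU d A (-(j : ℤ))

/-- The translation vector placing layer `m` of an Engel set:
layer `m` lies at height `2bm`, and the horizontal shifts `δ·u_i` accumulate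
according to (E3), (E4). (Integer division is floor division.) -/
def engelOffset (d : ℕ) (A : ℤ → ℤ) (b δ : ℝ) (m : ℤ) : Euc d :=
  ((2 * b) * (m : ℝ)) • eVec d d + δ • engelCum d A (m / 2)

/-- The horizontal grid `Y = 2aℤ^{d-1} × {0}` in `ℝ^d`. -/
def engelGrid (d : ℕ) (a : ℝ) : Set (Euc d) :=
  {x | ∀ j : Fin d, ((j : ℕ) < d - 1 → ∃ m : ℤ, x j = 2 * a * (m : ℝ)) ∧
        ((j : ℕ) = d - 1 → x j = 0)}

/-- Layer `X_m` of the Engel set `X(A,a,b,δ)`. -/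
def engelLayer (d : ℕ) (A : ℤ → ℤ) (a b δ : ℝ) (m : ℤ) : Set (Euc d) :=
  engelOffset d A b δ m +ᵥ engelGrid d a

/-- The Engel set `X(A,a,b,δ) = ⋃_m X_m`. -/
def engelSet (d : ℕ) (A : ℤ → ℤ) (a b δ : ℝ) : Set (Euc d) :=
  ⋃ m : ℤ, engelLayer d A a b δ m

/-- A Delone set of type `(r,R)`: every open `r`-ball contains at most one point of `X`,
and every closed `R`-ball contains at least one point of `X`. -/
def IsDeloneSet {V : Type*} [MetricSpace V] (X : Set V) (r R : ℝ) : Prop :=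
  (∀ y : V, (X ∩ Metric.ball y r).Subsingleton) ∧
  (∀ y : V, (X ∩ Metric.closedBall y R).Nonempty)

/-- The ρ-cluster of `X` at `x`. -/
def cluster {V : Type*} [MetricSpace V] (X : Set V) (x : V) (ρ : ℝ) : Set V :=
  X ∩ Metric.closedBall x ρ

/-- Equivalence of the ρ-clusters of `X` at `x` and `x'`: an isometry of the ambient
space carries the one cluster onto the other, mapping center to center. -/
def ClustersEquiv {V : Type*} [MetricSpace V] (X : Set V) (x x' : V) (ρ : ℝ) : Prop :=
  ∃ g : V ≃ᵢ V, g x = x' ∧ g '' cluster X x ρ = cluster X x' ρ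

/-- A regular system: the symmetry group of `X` acts transitively on `X`. -/
def IsRegularSystem {V : Type*} [MetricSpace V] (X : Set V) : Prop :=
  ∀ x ∈ X, ∀ y ∈ X, ∃ g : V ≃ᵢ V, g '' X = X ∧ g x = y

/-- An `ab`-set on the line: the points can be enumerated in increasing order so that
consecutive gaps alternately equal `a` and `b`. -/
def IsABSet (X : Set ℝ) (a b : ℝ) : Prop :=
  ∃ f : ℤ → ℝ, StrictMono f ∧ Set.range f = X ∧
    (∀ i : ℤ, f (2 * i + 1) - f (2 * i) = a) ∧
    (∀ i : ℤ, f (2 * i + 2) - f (2 * i + 1) = b)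

/-! Enumerate `X` increasingly by `f`. Shifting indices by `2k` shifts `f` by `k (a + b)`, and
for odd `s` the sum `f i + f (s - i)` does not depend on `i`, so the index reflection `i ↦ s - i`
becomes a reflection of the line. Hence `f m` is carried to `f n` by a translation preserving `X`
when `n - m` is even, and by a reflection preserving `X` when `n - m` is odd. -/

def HasAlternatingGaps (f : ℤ → ℝ) (a b : ℝ) : Prop :=
  (∀ i : ℤ, f (2 * i + 1) - f (2 * i) = a) ∧ (∀ i : ℤ, f (2 * i + 2) - f (2 * i + 1) = b)

lemma add_mul_eq_add_zsmul {G : Type*} [AddCommGroup G] {f : ℤ → G} {t : ℤ} {c : G}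
    (h : ∀ i, f (i + t) = f i + c) (k i : ℤ) : f (i + k * t) = f i + k • c := by
  induction k using Int.induction_on with
  | zero => simp
  | succ k ih => rw [show i + (k + 1) * t = i + k * t + t by ring, h, ih, add_zsmul, one_zsmul,
      add_assoc]
  | pred k ih =>
    have hstep := h (i + (-k - 1) * t)
    rw [show i + (-k - 1) * t + t = i + -k * t by ring, ih] at hstep
    rw [eq_sub_of_add_eq hstep.symm, sub_zsmul, one_zsmul, add_sub_assoc, sub_eq_add_neg]

lemma image_range_eq_of_semiconj {α β : Type*} {f : α → β} {g : β → β} {σ : α → α}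
    (hσ : σ.Surjective) (h : ∀ i, g (f i) = f (σ i)) : g '' Set.range f = Set.range f := by
  rw [← Set.range_comp, ← hσ.range_comp f]
  exact congrArg Set.range (funext h)

namespace HasAlternatingGaps

variable {f : ℤ → ℝ} {a b : ℝ}

lemma add_two (hf : HasAlternatingGaps f a b) (i : ℤ) : f (i + 2) = f i + (a + b) := by
  obtain ⟨k, rfl | rfl⟩ := i.even_or_odd'
  · linarith [hf.1 k, hf.2 k]
  · have hodd := hf.2 k
    have heven := hf.1 (k + 1)
    ring_nf at hodd heven ⊢
    linarith

lemma add_two_mul (hf : HasAlternatingGaps f a b) (k i : ℤ) :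
    f (i + 2 * k) = f i + k * (a + b) := by
  rw [mul_comm, add_mul_eq_add_zsmul hf.add_two, zsmul_eq_mul]

lemma apply_add_apply_reflect (hf : HasAlternatingGaps f a b) (k i : ℤ) :
    f i + f (2 * k + 1 - i) = f 0 + f 1 + k * (a + b) := by
  obtain ⟨j, rfl | rfl⟩ := i.even_or_odd'
  · rw [show 2 * k + 1 - 2 * j = 1 + 2 * (k - j) by ring, hf.add_two_mul, ← zero_add (2 * j),
      hf.add_two_mul]
    push_cast
    ring
  · rw [show 2 * k + 1 - (2 * j + 1) = 0 + 2 * (k - j) by ring, hf.add_two_mul, add_comm _ 1,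
      hf.add_two_mul]
    push_cast
    ring

end HasAlternatingGaps

theorem abSet_isRegularSystem_general (a b : ℝ)
    (X : Set ℝ) (hX : IsABSet X a b) : IsRegularSystem X := by
  obtain ⟨f, -, rfl, hf⟩ := hX
  replace hf : HasAlternatingGaps f a b := hf
  rintro _ ⟨m, rfl⟩ _ ⟨n, rfl⟩
  obtain ⟨k, hk | hk⟩ := (n - m).even_or_odd'
  · refine ⟨IsometryEquiv.addRight (k * (a + b)),
      image_range_eq_of_semiconj (Equiv.addRight (2 * k)).surjective
        fun i => (hf.add_two_mul k i).symm, ?_⟩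
    simp only [IsometryEquiv.addRight_apply, ← hf.add_two_mul, show m + 2 * k = n by omega]
  · have hreflect : ∀ i, f m + f n - f i = f (2 * (k + m) + 1 - i) := fun i => by
      rw [show n = 2 * (k + m) + 1 - m by omega, hf.apply_add_apply_reflect,
        ← hf.apply_add_apply_reflect (k + m) i]
      ring
    refine ⟨IsometryEquiv.subLeft (f m + f n),
      image_range_eq_of_semiconj (Equiv.subLeft (2 * (k + m) + 1)).surjective hreflect, ?_⟩
    simp only [IsometryEquiv.subLeft_apply, add_sub_cancel_left]

/-- every `ab`-set on the real line is a regular system. -/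
theorem abSet_isRegularSystem (a b : ℝ) (ha : 0 < a) (hab : a ≤ b)
    (X : Set ℝ) (hX : IsABSet X a b) : IsRegularSystem X :=
  abSet_isRegularSystem_general a b X hX
end
end

section
/- For dimension 1, the regularity radius satisfies ρ̂₁ ≤ 2R: if X ⊂ ℝ is a Delone set of type (r,R) such that all 2R-clusters of X are mutually equivalent, then X is a regular system. -/
noncomputable section
open scoped Pointwise

/-!
Since `X` is uniformly discrete and unbounded in both directions, it is enumerated increasingly
by some `s : ℤ → ℝ`, and the covering condition bounds the gaps `d n = s (n + 1) - s n` by `2R`.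
Adjacency of two points of `X` can be expressed through metric betweenness, so the set of
distances from a point to its neighbours is an invariant of its `2R`-cluster. At `s n` this set
is `{d (n - 1), d n}`; comparing it at `s n` and `s (n + 1)` gives `d (n - 1) = d (n + 1)`.
With 2-periodic gaps, the translations by `s (2l) - s 0` and the reflections
`t ↦ s 0 + s (2l + 1) - t` are symmetries of `X`, and they carry `s 0` to every point of `X`.
-/

open Set Function

section Metric

variable {V : Type*} [MetricSpace V] {X : Set V}

def IsAdjacent (X : Set V) (p w : V) : Prop :=
  w ∈ X ∧ w ≠ p ∧ ∀ z ∈ X, dist p z + dist z w = dist p w → z = p ∨ z = w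

def adjacentDists (X : Set V) (p : V) (ρ : ℝ) : Set ℝ :=
  dist p '' {w | IsAdjacent X p w ∧ dist p w ≤ ρ}

theorem ClustersEquiv.symm {p q : V} {ρ : ℝ} (h : ClustersEquiv X p q ρ) :
    ClustersEquiv X q p ρ := by
  obtain ⟨g, hgp, hg⟩ := h
  refine ⟨g.symm, by rw [← hgp, g.symm_apply_apply], ?_⟩
  rw [← hg, g.image_symm, g.injective.preimage_image]

theorem ClustersEquiv.adjacentDists_subset {p q : V} {ρ : ℝ} (h : ClustersEquiv X p q ρ) :
    adjacentDists X p ρ ⊆ adjacentDists X q ρ := by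
  obtain ⟨g, rfl, hg⟩ := h
  have mem_cluster : ∀ z ∈ X, dist p z ≤ ρ → g z ∈ X := fun z hz hzp =>
    (hg ▸ mem_image_of_mem g ⟨hz, by rwa [Metric.mem_closedBall, dist_comm]⟩ :
      g z ∈ cluster X (g p) ρ).1
  rintro _ ⟨w, ⟨⟨hwX, hwp, hbtw⟩, hwρ⟩, rfl⟩
  refine ⟨g w, ⟨⟨mem_cluster w hwX hwρ, g.injective.ne hwp, ?_⟩, by rwa [g.dist_eq]⟩,
    g.dist_eq p w⟩
  intro z hzX hz
  have hzρ : z ∈ cluster X (g p) ρ := by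
    refine ⟨hzX, ?_⟩
    rw [Metric.mem_closedBall, dist_comm]
    linarith [dist_nonneg (x := z) (y := g w), g.dist_eq p w]
  rw [← hg] at hzρ
  obtain ⟨z', ⟨hz'X, -⟩, rfl⟩ := hzρ
  simp only [g.dist_eq] at hz
  rcases hbtw z' hz'X hz with rfl | rfl <;> simp

theorem ClustersEquiv.adjacentDists_eq {p q : V} {ρ : ℝ} (h : ClustersEquiv X p q ρ) :
    adjacentDists X p ρ = adjacentDists X q ρ :=
  h.adjacentDists_subset.antisymm h.symm.adjacentDists_subset

theorem IsDeloneSet.finite_inter_of_isCompact {r R : ℝ} (hX : IsDeloneSet X r R) (hr : 0 < r)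
    {K : Set V} (hK : IsCompact K) : (X ∩ K).Finite := by
  obtain ⟨t, -, ht, hKt⟩ := finite_cover_balls_of_compact hK hr
  refine (ht.biUnion fun y _ => (hX.1 y).finite).subset ?_
  rintro z ⟨hzX, hzK⟩
  obtain ⟨y, hy, hzy⟩ := mem_iUnion₂.mp (hKt hzK)
  exact mem_iUnion₂.mpr ⟨y, hy, hzX, hzy⟩

end Metric

section Real

variable {X : Set ℝ} {r R : ℝ}

theorem IsDeloneSet.exists_gt (hX : IsDeloneSet X r R) (p : ℝ) : ∃ z ∈ X, p < z := by
  obtain ⟨z, hzX, hz⟩ := hX.2 (p + R + 1)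
  rw [Metric.mem_closedBall, Real.dist_eq, abs_le] at hz
  exact ⟨z, hzX, by linarith⟩

theorem IsDeloneSet.exists_lt (hX : IsDeloneSet X r R) (p : ℝ) : ∃ z ∈ X, z < p := by
  obtain ⟨z, hzX, hz⟩ := hX.2 (p - R - 1)
  rw [Metric.mem_closedBall, Real.dist_eq, abs_le] at hz
  exact ⟨z, hzX, by linarith⟩

theorem exists_strictMono_range_eq (hfin : ∀ a b, (X ∩ Icc a b).Finite)
    (hgt : ∀ p, ∃ z ∈ X, p < z) (hlt : ∀ p, ∃ z ∈ X, z < p) {x : ℝ} (hx : x ∈ X) :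
    ∃ s : ℤ → ℝ, StrictMono s ∧ range s = X ∧ s 0 = x := by
  let : LocallyFiniteOrder X := LocallyFiniteOrder.ofFiniteIcc fun a b =>
    ((hfin a b).preimage Subtype.val_injective.injOn).subset fun z hz => ⟨z.2, hz⟩
  let := LinearLocallyFiniteOrder.succOrder X
  let := LinearLocallyFiniteOrder.predOrder X
  have : NoMaxOrder X := ⟨fun p => by
    obtain ⟨z, hzX, hz⟩ := hgt p; exact ⟨⟨z, hzX⟩, hz⟩⟩
  have : NoMinOrder X := ⟨fun p => by
    obtain ⟨z, hzX, hz⟩ := hlt p; exact ⟨⟨z, hzX⟩, hz⟩⟩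
  have : Nonempty X := ⟨⟨x, hx⟩⟩
  let e : X ≃o ℤ := orderIsoIntOfLinearSuccPredArch
  refine ⟨fun n => e.symm (n + e ⟨x, hx⟩), ?_, ?_, by simp⟩
  · exact fun m n hmn => e.symm.strictMono (add_lt_add_left hmn _)
  · ext z
    refine ⟨?_, fun hz => ⟨e ⟨z, hz⟩ - e ⟨x, hx⟩, by simp⟩⟩
    rintro ⟨n, rfl⟩
    exact Subtype.coe_prop _

theorem Real.dist_add_dist_eq_iff_mem_uIcc {a b c : ℝ} :
    dist a b + dist b c = dist a c ↔ b ∈ uIcc a c := by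
  rw [dist_add_dist_eq_iff, ← mem_segment_iff_wbtw, segment_eq_uIcc]

variable {s : ℤ → ℝ}

theorem IsDeloneSet.sub_le_of_strictMono (hX : IsDeloneSet (range s) r R) (hs : StrictMono s)
    (n : ℤ) : s (n + 1) - s n ≤ 2 * R := by
  by_contra! h
  obtain ⟨_, ⟨m, rfl⟩, hm⟩ := hX.2 ((s n + s (n + 1)) / 2)
  rw [Metric.mem_closedBall, Real.dist_eq, abs_le] at hm
  have h₁ : n < m := hs.lt_iff_lt.mp (by linarith)
  have h₂ : m < n + 1 := hs.lt_iff_lt.mp (by linarith)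
  omega

theorem StrictMono.isAdjacent_range_iff (hs : StrictMono s) {n : ℤ} {w : ℝ} :
    IsAdjacent (range s) (s n) w ↔ w = s (n - 1) ∨ w = s (n + 1) := by
  constructor
  · rintro ⟨⟨j, rfl⟩, hjn, hbtw⟩
    rw [hs.injective.ne_iff] at hjn
    simp only [hs.injective.eq_iff]
    by_contra! hj
    obtain ⟨m, hm⟩ : ∃ m, (n < m ∧ m < j) ∨ (j < m ∧ m < n) := by
      rcases lt_or_gt_of_ne hjn with h | h
      · exact ⟨n - 1, by omega⟩
      · exact ⟨n + 1, by omega⟩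
    have hm_btw : s m ∈ uIcc (s n) (s j) := by
      rcases hm with ⟨h₁, h₂⟩ | ⟨h₁, h₂⟩
      · exact Icc_subset_uIcc ⟨hs.monotone h₁.le, hs.monotone h₂.le⟩
      · exact Icc_subset_uIcc' ⟨hs.monotone h₁.le, hs.monotone h₂.le⟩
    have := hbtw (s m) ⟨m, rfl⟩ (Real.dist_add_dist_eq_iff_mem_uIcc.mpr hm_btw)
    simp only [hs.injective.eq_iff] at this
    omega
  · have adjacent : ∀ m, (m = n - 1 ∨ m = n + 1) → IsAdjacent (range s) (s n) (s m) := by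
      intro m hm
      refine ⟨⟨m, rfl⟩, hs.injective.ne (by omega), ?_⟩
      rintro _ ⟨j, rfl⟩ hj
      rw [Real.dist_add_dist_eq_iff_mem_uIcc, mem_uIcc, hs.le_iff_le, hs.le_iff_le,
        hs.le_iff_le, hs.le_iff_le] at hj
      simp only [hs.injective.eq_iff]
      omega
    rintro (rfl | rfl)
    exacts [adjacent _ (.inl rfl), adjacent _ (.inr rfl)]

theorem StrictMono.adjacentDists_range {ρ : ℝ} (hs : StrictMono s)
    (hgap : ∀ n, s (n + 1) - s n ≤ ρ) (n : ℤ) :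
    adjacentDists (range s) (s n) ρ = {s n - s (n - 1), s (n + 1) - s n} := by
  have dist_pred : dist (s n) (s (n - 1)) = s n - s (n - 1) :=
    by rw [Real.dist_eq, abs_of_pos (sub_pos.2 (hs (by omega)))]
  have dist_succ : dist (s n) (s (n + 1)) = s (n + 1) - s n :=
    by rw [dist_comm, Real.dist_eq, abs_of_pos (sub_pos.2 (hs (by omega)))]
  have hgap_pred : s n - s (n - 1) ≤ ρ := by simpa using hgap (n - 1)
  ext d
  simp only [adjacentDists, mem_image, mem_ofPred_eq, hs.isAdjacent_range_iff, mem_insert_iff,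
    mem_singleton_iff]
  constructor
  · rintro ⟨w, ⟨rfl | rfl, -⟩, rfl⟩
    exacts [.inl dist_pred, .inr dist_succ]
  · rintro (rfl | rfl)
    · exact ⟨_, ⟨.inl rfl, dist_pred ▸ hgap_pred⟩, dist_pred⟩
    · exact ⟨_, ⟨.inr rfl, dist_succ ▸ hgap n⟩, dist_succ⟩

theorem StrictMono.periodic_gap_of_clustersEquiv {ρ : ℝ} (hs : StrictMono s)
    (hgap : ∀ n, s (n + 1) - s n ≤ ρ)
    (hcl : ∀ n, ClustersEquiv (range s) (s n) (s (n + 1)) ρ) :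
    Periodic (fun n => s (n + 1) - s n) 2 := by
  intro n
  have h := (hcl (n + 1)).adjacentDists_eq
  rw [hs.adjacentDists_range hgap, hs.adjacentDists_range hgap, pair_eq_pair_iff] at h
  ring_nf at h ⊢
  rcases h with ⟨h₁, h₂⟩ | ⟨h₁, -⟩ <;> linarith

theorem Function.Periodic.eq_apply_zero_of_int {α : Type*} {f : ℤ → α} (h : Periodic f 1)
    (n : ℤ) : f n = f 0 := by
  simpa using h.int_mul n 0

theorem apply_add_two_mul_of_periodic_gap (hd : Periodic (fun n => s (n + 1) - s n) 2)
    (l j : ℤ) : s (j + 2 * l) = s j + (s (2 * l) - s 0) := by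
  have : Periodic (fun j => s (j + 2 * l) - s j) 1 := fun j => by
    have := hd.int_mul l j
    simp only [Int.cast_id] at this ⊢
    rw [show j + 1 + 2 * l = j + 2 * l + 1 by ring, show j + l * 2 = j + 2 * l by ring] at *
    linarith
  have := this.eq_apply_zero_of_int j
  simp only [zero_add] at this
  linarith

theorem apply_two_mul_add_one_sub_of_periodic_gap (hd : Periodic (fun n => s (n + 1) - s n) 2)
    (l j : ℤ) : s (2 * l + 1 - j) = s 0 + s (2 * l + 1) - s j := by
  have : Periodic (fun j => s j + s (2 * l + 1 - j)) 1 := fun j => by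
    have := hd.int_mul (l - j) j
    simp only [Int.cast_id] at this ⊢
    rw [show j + (l - j) * 2 + 1 = 2 * l + 1 - j by ring,
      show j + (l - j) * 2 = 2 * l + 1 - (j + 1) by ring] at this
    linarith
  have := this.eq_apply_zero_of_int j
  simp only [sub_zero] at this
  linarith

theorem image_range_eq_of_semiconj_s1 {ι α : Type*} {f : ι → α} {g : α → α} {φ : ι → ι}
    (hφ : Surjective φ) (h : ∀ j, g (f j) = f (φ j)) : g '' range f = range f := by
  rw [← range_comp, show g ∘ f = f ∘ φ from funext h, hφ.range_comp]

theorem exists_isometryEquiv_of_periodic_gap (hd : Periodic (fun n => s (n + 1) - s n) 2)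
    (m : ℤ) : ∃ g : ℝ ≃ᵢ ℝ, g '' range s = range s ∧ g (s 0) = s m := by
  obtain ⟨l, rfl | rfl⟩ := Int.even_or_odd' m
  · refine ⟨IsometryEquiv.addRight (s (2 * l) - s 0), ?_, by simp⟩
    refine image_range_eq_of_semiconj_s1 (Equiv.addRight (2 * l)).surjective fun j => ?_
    simp [apply_add_two_mul_of_periodic_gap hd]
  · refine ⟨IsometryEquiv.subLeft (s 0 + s (2 * l + 1)), ?_, by simp⟩
    refine image_range_eq_of_semiconj_s1 (Equiv.subLeft (2 * l + 1)).surjective fun j => ?_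
    simp [apply_two_mul_add_one_sub_of_periodic_gap hd]

end Real

theorem regularityRadius_dim1_le_general (r R : ℝ) (hr : 0 < r)
    (X : Set ℝ) (hX : IsDeloneSet X r R)
    (hclus : ∀ x ∈ X, ∀ x' ∈ X, ClustersEquiv X x x' (2 * R)) :
    IsRegularSystem X := by
  intro x hx y hy
  obtain ⟨s, hs, rfl, rfl⟩ := exists_strictMono_range_eq
    (fun _ _ => hX.finite_inter_of_isCompact hr isCompact_Icc) hX.exists_gt hX.exists_lt hx
  obtain ⟨m, rfl⟩ := hy
  have hgap := hX.sub_le_of_strictMono hs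
  have hd := hs.periodic_gap_of_clustersEquiv hgap fun n => hclus _ ⟨n, rfl⟩ _ ⟨n + 1, rfl⟩
  exact exists_isometryEquiv_of_periodic_gap hd m

/-- `ρ̂₁ ≤ 2R`. If `X ⊂ ℝ` is a Delone set of type `(r,R)` all of whose
`2R`-clusters are mutually equivalent, then `X` is a regular system. -/
theorem regularityRadius_dim1_le (r R : ℝ) (hr : 0 < r) (hrR : r < R)
    (X : Set ℝ) (hX : IsDeloneSet X r R)
    (hclus : ∀ x ∈ X, ∀ x' ∈ X, ClustersEquiv X x x' (2 * R)) :
    IsRegularSystem X :=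
  regularityRadius_dim1_le_general r R hr X hX hclus
end
end

section
/- For dimension 1 and any ρ with 0 < ρ < 2R, there exists a Delone set X ⊂ ℝ of type (r,R) for some r ≤ ρ/2 whose ρ-clusters are all mutually equivalent but which is not a regular system. Consequently ρ̂₁ = 2R. -/
noncomputable section
open scoped Pointwise

/-!
An isometry of the line is a translation or a reflection, so an equivalence of the clusters at
two points either preserves or swaps the gaps to their left and right neighbours. In a Delone
set of type `(r, R)` both neighbours of a point lie in its `2R`-cluster; if all `2R`-clusters are
equivalent, the sum `c` of the two gaps at a point is therefore the same everywhere. Hence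
`X + c = X` and `X = {x₀, x₁} + cℤ` for consecutive points `x₀ < x₁`, which the translations by
`cℤ` and the reflection swapping `x₀` and `x₁` act on transitively.

For `ρ < 2R`, let the gaps alternate between `ρ` and pairwise distinct values in `(ρ, 2R)`.
Every `ρ`-cluster is then a pair of points at distance `ρ`, centred at one of them; but a
symmetry carrying a point to its `ρ`-neighbour must carry the gap on its other side onto a
different gap.
-/

open Set

theorem Real.exists_isometryEquiv_eq_addRight_or_subLeft (g : ℝ ≃ᵢ ℝ) :
    ∃ c, g = .addRight c ∨ g = .subLeft c := by
  have hdist (s t : ℝ) : |g s - g t| = |s - t| := by simpa [Real.dist_eq] using g.dist_eq s t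
  have hfrom0 (t : ℝ) : g t - g 0 = t ∨ g t - g 0 = -t := by
    simpa using abs_eq_abs.mp (hdist t 0)
  refine ⟨g 0, ?_⟩
  rcases hfrom0 1 with h1 | h1
  · refine .inl (IsometryEquiv.ext fun t => ?_)
    rcases hfrom0 t with h | h
    · rw [IsometryEquiv.addRight_apply]; linarith
    · rcases abs_eq_abs.mp (hdist t 1) with h' | h' <;> rw [IsometryEquiv.addRight_apply] <;>
        linarith
  · refine .inr (IsometryEquiv.ext fun t => ?_)
    rcases hfrom0 t with h | h
    · rcases abs_eq_abs.mp (hdist t 1) with h' | h' <;> rw [IsometryEquiv.subLeft_apply] <;>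
        linarith
    · rw [IsometryEquiv.subLeft_apply]; linarith

section MetricSpace

variable {V : Type*} [MetricSpace V] {X : Set V} {s : ℝ}

theorem clustersEquiv_of_forall_exists {K : Set V} {o : V}
    (h : ∀ x ∈ X, ∃ g : V ≃ᵢ V, g o = x ∧ g '' K = cluster X x s) :
    ∀ x ∈ X, ∀ y ∈ X, ClustersEquiv X x y s := by
  intro x hx y hy
  obtain ⟨gx, hgx, hKx⟩ := h x hx
  obtain ⟨gy, hgy, hKy⟩ := h y hy
  refine ⟨gx.symm.trans gy, by simp [← hgx, hgy], ?_⟩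
  change (gy ∘ gx.symm) '' _ = _
  rw [image_comp, ← hKx, image_image gx.symm]
  simpa using hKy

theorem isRegularSystem_of_forall_exists {o : V}
    (h : ∀ x ∈ X, ∃ g : V ≃ᵢ V, g '' X = X ∧ g o = x) : IsRegularSystem X := by
  intro x hx y hy
  obtain ⟨gx, hXx, hgx⟩ := h x hx
  obtain ⟨gy, hXy, hgy⟩ := h y hy
  refine ⟨gx.symm.trans gy, ?_, by simp [← hgx, hgy]⟩
  change (gy ∘ gx.symm) '' X = X
  rw [image_comp]
  nth_rw 1 [← hXx]
  rw [image_image gx.symm]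
  simpa using hXy

theorem clustersEquiv_of_image_eq (g : V ≃ᵢ V) (hg : g '' X = X) (x : V) :
    ClustersEquiv X x (g x) s :=
  ⟨g, rfl, by rw [cluster, image_inter g.injective, hg, g.image_closedBall, cluster]⟩

end MetricSpace

theorem IsDeloneSet.pairwise_le_dist {E : Type*} [NormedAddCommGroup E] [NormedSpace ℝ E]
    {X : Set E} {r R : ℝ} (hX : IsDeloneSet X r R) : X.Pairwise fun u v => 2 * r ≤ dist u v := by
  intro u hu v hv huv
  by_contra! hlt
  refine huv (hX.1 (midpoint ℝ u v) ⟨hu, ?_⟩ ⟨hv, ?_⟩)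
  · rw [Metric.mem_ball, dist_left_midpoint (𝕜 := ℝ), Real.norm_two]; linarith
  · rw [Metric.mem_ball, dist_right_midpoint (𝕜 := ℝ), Real.norm_two]; linarith

section Neighbours

variable {α : Type*} [LinearOrder α] {X : Set α} {x z : α}

theorem IsLeast.isGreatest_inter_Iio (h : IsLeast (X ∩ Ioi x) z) (hx : x ∈ X) :
    IsGreatest (X ∩ Iio z) x :=
  ⟨⟨hx, h.1.2⟩, fun _ ⟨ht, htz⟩ => not_lt.1 fun hxt => (h.2 ⟨ht, hxt⟩).not_gt htz⟩

theorem IsGreatest.isLeast_inter_Ioi (h : IsGreatest (X ∩ Iio x) z) (hx : x ∈ X) :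
    IsLeast (X ∩ Ioi z) x :=
  ⟨⟨hx, h.1.2⟩, fun _ ⟨ht, hzt⟩ => not_lt.1 fun htx => (h.2 ⟨ht, htx⟩).not_gt hzt⟩

end Neighbours

section RealLine

variable {X : Set ℝ} {x y z w s : ℝ}

theorem cluster_eq_inter_Icc (X : Set ℝ) (x s : ℝ) : cluster X x s = X ∩ Icc (x - s) (x + s) := by
  rw [cluster, Real.closedBall_eq_Icc]

theorem isLeast_cluster_inter_Ioi_iff :
    IsLeast (cluster X x s ∩ Ioi x) z ↔ IsLeast (X ∩ Ioi x) z ∧ z ≤ x + s := by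
  simp only [cluster_eq_inter_Icc, IsLeast, lowerBounds, mem_inter_iff, mem_Icc, mem_Ioi,
    mem_ofPred_eq]
  constructor
  · rintro ⟨⟨⟨hzX, -, hzs⟩, hxz⟩, hleast⟩
    refine ⟨⟨⟨hzX, hxz⟩, fun t ⟨htX, hxt⟩ => ?_⟩, hzs⟩
    by_contra! htz
    exact htz.not_ge (hleast ⟨⟨htX, by linarith, by linarith⟩, hxt⟩)
  · rintro ⟨⟨⟨hzX, hxz⟩, hleast⟩, hzs⟩
    exact ⟨⟨⟨hzX, by linarith, hzs⟩, hxz⟩, fun t ⟨⟨htX, _⟩, hxt⟩ => hleast ⟨htX, hxt⟩⟩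

theorem isGreatest_cluster_inter_Iio_iff :
    IsGreatest (cluster X x s ∩ Iio x) w ↔ IsGreatest (X ∩ Iio x) w ∧ x - s ≤ w := by
  simp only [cluster_eq_inter_Icc, IsGreatest, upperBounds, mem_inter_iff, mem_Icc, mem_Iio,
    mem_ofPred_eq]
  constructor
  · rintro ⟨⟨⟨hwX, hws, -⟩, hwx⟩, hgreatest⟩
    refine ⟨⟨⟨hwX, hwx⟩, fun t ⟨htX, htx⟩ => ?_⟩, hws⟩
    by_contra! hwt
    exact hwt.not_ge (hgreatest ⟨⟨htX, by linarith, by linarith⟩, htx⟩)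
  · rintro ⟨⟨⟨hwX, hwx⟩, hgreatest⟩, hws⟩
    exact ⟨⟨⟨hwX, hws, by linarith⟩, hwx⟩, fun t ⟨⟨htX, _⟩, htx⟩ => hgreatest ⟨htX, htx⟩⟩

theorem ClustersEquiv.neighbour_gaps {z' w' : ℝ} (h : ClustersEquiv X x y s)
    (hz : IsLeast (X ∩ Ioi x) z) (hw : IsGreatest (X ∩ Iio x) w)
    (hz' : IsLeast (X ∩ Ioi y) z') (hw' : IsGreatest (X ∩ Iio y) w')
    (hzs : z ≤ x + s) (hws : x - s ≤ w) :
    (z' - y = z - x ∧ y - w' = x - w) ∨ (z' - y = x - w ∧ y - w' = z - x) := by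
  obtain ⟨g, rfl, hg⟩ := h
  have hzc := isLeast_cluster_inter_Ioi_iff.2 ⟨hz, hzs⟩
  have hwc := isGreatest_cluster_inter_Iio_iff.2 ⟨hw, hws⟩
  obtain ⟨c, rfl | rfl⟩ := Real.exists_isometryEquiv_eq_addRight_or_subLeft g
  · change (· + c) '' _ = _ at hg
    have hmono : Monotone (· + c) := monotone_id.add_const c
    have h₁ := hmono.map_isLeast hzc
    have h₂ := hmono.map_isGreatest hwc
    rw [image_inter (add_left_injective c), hg, image_add_const_Ioi] at h₁
    rw [image_inter (add_left_injective c), hg, image_add_const_Iio] at h₂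
    have := hz'.unique (isLeast_cluster_inter_Ioi_iff.1 h₁).1
    have := hw'.unique (isGreatest_cluster_inter_Iio_iff.1 h₂).1
    left
    simp only [IsometryEquiv.addRight_apply]
    constructor <;> linarith
  · change (c - ·) '' _ = _ at hg
    have hanti : Antitone (c - ·) := fun _ _ h => sub_le_sub_left h c
    have h₁ := hanti.map_isLeast hzc
    have h₂ := hanti.map_isGreatest hwc
    rw [image_inter sub_right_injective, hg, image_const_sub_Ioi] at h₁
    rw [image_inter sub_right_injective, hg, image_const_sub_Iio] at h₂
    have := hw'.unique (isGreatest_cluster_inter_Iio_iff.1 h₁).1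
    have := hz'.unique (isLeast_cluster_inter_Ioi_iff.1 h₂).1
    right
    simp only [IsometryEquiv.subLeft_apply]
    constructor <;> linarith

end RealLine

section DeloneLine

variable {X : Set ℝ} {r R : ℝ}

theorem IsDeloneSet.exists_isLeast_inter_Ioi (hX : IsDeloneSet X r R) (hr : 0 < r) (x : ℝ) :
    ∃ z, IsLeast (X ∩ Ioi x) z ∧ z ≤ x + 2 * R := by
  have hclosed : IsClosed (X ∩ Ioi x) := Metric.isClosed_of_pairwise_le_dist (by positivity)
    (hX.pairwise_le_dist.mono inter_subset_left)
  obtain ⟨t, htX, ht⟩ := hX.2 (x + R + 1)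
  rw [Real.closedBall_eq_Icc, mem_Icc] at ht
  have hleast := hclosed.isLeast_csInf ⟨t, htX, show x < t by linarith⟩
    ⟨x, fun _ h => le_of_lt h.2⟩
  refine ⟨_, hleast, not_lt.1 fun hgap => ?_⟩
  -- a closed `R`-ball centred just beyond `x + R` meets `X` inside the gap
  set δ := sInf (X ∩ Ioi x) - (x + 2 * R)
  obtain ⟨u, huX, hu⟩ := hX.2 (x + R + δ / 2)
  rw [Real.closedBall_eq_Icc, mem_Icc] at hu
  have := hleast.2 ⟨huX, show x < u by linarith⟩
  linarith

theorem IsDeloneSet.exists_isGreatest_inter_Iio (hX : IsDeloneSet X r R) (hr : 0 < r) (x : ℝ) :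
    ∃ w, IsGreatest (X ∩ Iio x) w ∧ x - 2 * R ≤ w := by
  have hclosed : IsClosed (X ∩ Iio x) := Metric.isClosed_of_pairwise_le_dist (by positivity)
    (hX.pairwise_le_dist.mono inter_subset_left)
  obtain ⟨t, htX, ht⟩ := hX.2 (x - R - 1)
  rw [Real.closedBall_eq_Icc, mem_Icc] at ht
  have hgreatest := hclosed.isGreatest_csSup ⟨t, htX, show t < x by linarith⟩
    ⟨x, fun _ h => le_of_lt h.2⟩
  refine ⟨_, hgreatest, not_lt.1 fun hgap => ?_⟩
  set δ := x - 2 * R - sSup (X ∩ Iio x)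
  obtain ⟨u, huX, hu⟩ := hX.2 (x - R - δ / 2)
  rw [Real.closedBall_eq_Icc, mem_Icc] at hu
  have := hgreatest.2 ⟨huX, show u < x by linarith⟩
  linarith

end DeloneLine

theorem isRegularSystem_of_periodic {X : Set ℝ} {c p q : ℝ} (hc : 0 < c)
    (hper : Function.Periodic (· ∈ X) c) (hp : p ∈ X) (hq : q ∈ X)
    (hX : X ∩ Ico p (p + c) ⊆ {p, q}) : IsRegularSystem X := by
  have hshift (u : ℝ) (hu : u ∈ X) (k : ℤ) : u + k • c ∈ X := (hper.zsmul k u).mpr hu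
  have hdecomp (x : ℝ) (hx : x ∈ X) : ∃ k : ℤ, x = p + k • c ∨ x = q + k • c := by
    refine ⟨toIcoDiv hc p x, ?_⟩
    have hmem : x - toIcoDiv hc p x • c ∈ X := (hper.sub_zsmul_eq _).mpr hx
    rcases hX ⟨hmem, sub_toIcoDiv_zsmul_mem_Ico hc p x⟩ with h | h
    · exact .inl (eq_add_of_sub_eq h)
    · exact .inr (eq_add_of_sub_eq h)
  have hreflect (k : ℤ) (x : ℝ) (hx : x ∈ X) : p + q + k • c - x ∈ X := by
    obtain ⟨m, rfl | rfl⟩ := hdecomp x hx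
    · convert hshift q hq (k - m) using 1; rw [sub_smul]; ring
    · convert hshift p hp (k - m) using 1; rw [sub_smul]; ring
  refine isRegularSystem_of_forall_exists (o := p) fun x hx => ?_
  obtain ⟨k, rfl | rfl⟩ := hdecomp x hx
  · refine ⟨.addRight (k • c),
      (Equiv.bijOn _ fun t => ⟨fun h => ?_, fun h => hshift t h k⟩).image_eq, rfl⟩
    simpa using hshift _ h (-k)
  · refine ⟨.subLeft (p + q + k • c),
      (Equiv.bijOn _ fun t => ⟨fun h => ?_, hreflect k t⟩).image_eq,
      by rw [IsometryEquiv.subLeft_apply]; abel⟩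
    simpa using hreflect k _ h

theorem IsDeloneSet.isRegularSystem_of_clustersEquiv {X : Set ℝ} {r R : ℝ}
    (hX : IsDeloneSet X r R) (hr : 0 < r)
    (hequiv : ∀ x ∈ X, ∀ y ∈ X, ClustersEquiv X x y (2 * R)) : IsRegularSystem X := by
  choose nxt hnxt hnxtR using hX.exists_isLeast_inter_Ioi hr
  choose prv hprv hprvR using hX.exists_isGreatest_inter_Iio hr
  obtain ⟨x₀, hx₀, -⟩ := hX.2 0
  set c := nxt x₀ - prv x₀
  have hsum (x : ℝ) (hx : x ∈ X) : nxt x - prv x = c := by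
    rcases (hequiv x₀ hx₀ x hx).neighbour_gaps (hnxt x₀) (hprv x₀) (hnxt x) (hprv x)
      (hnxtR x₀) (hprvR x₀) with ⟨h₁, h₂⟩ | ⟨h₁, h₂⟩ <;> linarith
  have hprv_nxt (x : ℝ) (hx : x ∈ X) : prv (nxt x) = x :=
    (hprv _).unique ((hnxt x).isGreatest_inter_Iio hx)
  have hnxt_prv (x : ℝ) (hx : x ∈ X) : nxt (prv x) = x :=
    (hnxt _).unique ((hprv x).isLeast_inter_Ioi hx)
  have hnxt_nxt (x : ℝ) (hx : x ∈ X) : nxt (nxt x) = x + c := by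
    have := hsum _ (hnxt x).1.1
    rw [hprv_nxt x hx] at this
    linarith
  have hc : 0 < c := by linarith [(hnxt x₀).1.2.out, (hprv x₀).1.2.out]
  refine isRegularSystem_of_periodic hc (fun t => propext ⟨fun ht => ?_, fun ht => ?_⟩) hx₀
    (hnxt x₀).1.1 ?_
  · have := hsum _ (hprv (t + c)).1.1
    rw [hnxt_prv _ ht] at this
    rw [show t = prv (prv (t + c)) by linarith]
    exact (hprv _).1.1
  · rw [← hnxt_nxt t ht]
    exact (hnxt _).1.1
  · rintro t ⟨htX, hx₀t, htc⟩
    rcases hx₀t.eq_or_lt with rfl | hlt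
    · exact .inl rfl
    rcases ((hnxt x₀).2 ⟨htX, hlt⟩).eq_or_lt with h | h
    · exact .inr h.symm
    have := (hnxt (nxt x₀)).2 ⟨htX, h⟩
    rw [hnxt_nxt x₀ hx₀] at this
    exact absurd htc this.not_gt

def intPartialSum {M : Type*} [AddCommGroup M] (g : ℤ → M) (n : ℤ) : M :=
  ∑ k ∈ Finset.Ico 0 n, g k - ∑ k ∈ Finset.Ico n 0, g k

theorem intPartialSum_add_one {M : Type*} [AddCommGroup M] (g : ℤ → M) (n : ℤ) :
    intPartialSum g (n + 1) = intPartialSum g n + g n := by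
  rcases le_or_gt 0 n with hn | hn
  · rw [intPartialSum, intPartialSum, Finset.Ico_eq_empty_of_le hn,
      Finset.Ico_eq_empty_of_le (show 0 ≤ n + 1 by omega), ← Order.succ_eq_add_one,
      ← Finset.insert_Ico_right_eq_Ico_succ hn, Finset.sum_insert Finset.right_notMem_Ico]
    abel
  · rw [intPartialSum, intPartialSum, Finset.Ico_eq_empty_of_le hn.le,
      Finset.Ico_eq_empty_of_le (show n + 1 ≤ 0 by omega), ← Order.succ_eq_add_one,
      ← Finset.insert_Ico_succ_left_eq_Ico hn, Finset.sum_insert (by simp)]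
    abel

section IntSequence

theorem StrictMono.isLeast_range_inter_Ioi {α : Type*} [LinearOrder α] {P : ℤ → α}
    (hP : StrictMono P) (n : ℤ) : IsLeast (range P ∩ Ioi (P n)) (P (n + 1)) := by
  refine ⟨⟨mem_range_self _, hP (lt_add_one n)⟩, ?_⟩
  rintro _ ⟨⟨m, rfl⟩, hm⟩
  exact hP.le_iff_le.2 (Int.add_one_le_of_lt (hP.lt_iff_lt.1 hm))

theorem StrictMono.isGreatest_range_inter_Iio {α : Type*} [LinearOrder α] {P : ℤ → α}
    (hP : StrictMono P) (n : ℤ) : IsGreatest (range P ∩ Iio (P n)) (P (n - 1)) := by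
  refine ⟨⟨mem_range_self _, hP (sub_one_lt n)⟩, ?_⟩
  rintro _ ⟨⟨m, rfl⟩, hm⟩
  exact hP.le_iff_le.2 (Int.le_sub_one_of_lt (hP.lt_iff_lt.1 hm))

variable {P : ℤ → ℝ}

theorem exists_mem_Ico_of_forall_le_sub {δ : ℝ} (hδ : 0 < δ) (hgap : ∀ n, δ ≤ P (n + 1) - P n)
    (y : ℝ) : ∃ n, y ∈ Ico (P n) (P (n + 1)) := by
  have hgrowth (m n : ℤ) (hmn : m ≤ n) : P m + δ * (n - m) ≤ P n := by
    induction n, hmn using Int.leInduction with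
    | base => simp
    | succ n _ ih => push_cast; linarith [hgap n]
  obtain ⟨N, hN⟩ := exists_nat_gt (|y - P 0| / δ)
  rw [div_lt_iff₀ hδ] at hN
  have hbdd : ∃ b : ℤ, ∀ n, P n ≤ y → n ≤ b := by
    refine ⟨N, fun n hn => not_lt.1 fun hNn => ?_⟩
    have hNn' : (N : ℝ) + 1 ≤ n := by exact_mod_cast hNn
    have := hgrowth 0 n (by omega)
    have := mul_le_mul_of_nonneg_left hNn' hδ.le
    push_cast at *
    linarith [le_abs_self (y - P 0)]
  have hne : ∃ n : ℤ, P n ≤ y := by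
    refine ⟨-N, ?_⟩
    have := hgrowth (-N) 0 (by omega)
    push_cast at this
    linarith [neg_abs_le (y - P 0)]
  obtain ⟨n, hn, hmax⟩ := Int.exists_greatest_of_bdd hbdd hne
  exact ⟨n, hn, lt_of_not_ge fun h => by have := hmax _ h; omega⟩

theorem isDeloneSet_range_of_gaps {r R : ℝ} (hr : 0 < r) (hlow : ∀ n, 2 * r ≤ P (n + 1) - P n)
    (hup : ∀ n, P (n + 1) - P n ≤ 2 * R) : IsDeloneSet (range P) r R := by
  have hP : StrictMono P := strictMono_int_of_lt_succ fun n => by linarith [hlow n]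
  have hsep (m n : ℤ) (hmn : m < n) : 2 * r ≤ P n - P m := by
    linarith [hlow m, hP.monotone (Int.add_one_le_of_lt hmn)]
  refine ⟨fun y => ?_, fun y => ?_⟩
  · rintro _ ⟨⟨m, rfl⟩, hm⟩ _ ⟨⟨n, rfl⟩, hn⟩
    rw [Metric.mem_ball, Real.dist_eq, abs_lt] at hm hn
    rcases lt_trichotomy m n with h | rfl | h
    · linarith [hsep m n h]
    · rfl
    · linarith [hsep n m h]
  · obtain ⟨n, hn, hn'⟩ := exists_mem_Ico_of_forall_le_sub (by positivity) hlow y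
    rw [Real.closedBall_eq_Icc]
    rcases le_total (y - P n) R with h | h
    · exact ⟨P n, mem_range_self n, by constructor <;> linarith⟩
    · exact ⟨P (n + 1), mem_range_self _, by constructor <;> linarith [hup n]⟩

theorem StrictMono.cluster_range_eq_pair (hP : StrictMono P) {n : ℤ} {s x : ℝ}
    (hn : P (n + 1) - P n ≤ s) (hleft : s < P n - P (n - 1))
    (hright : s < P (n + 2) - P (n + 1)) (hx : x = P n ∨ x = P (n + 1)) :
    cluster (range P) x s = {P n, P (n + 1)} := by
  have hPn : P n < P (n + 1) := hP (lt_add_one n)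
  ext t
  rw [cluster_eq_inter_Icc, mem_inter_iff, mem_Icc, mem_insert_iff, mem_singleton_iff]
  constructor
  · rintro ⟨⟨m, rfl⟩, hlo, hhi⟩
    have h₁ : n ≤ m := by
      by_contra! h
      have := hP.monotone (Int.le_sub_one_of_lt h)
      rcases hx with rfl | rfl <;> linarith
    have h₂ : m ≤ n + 1 := by
      by_contra! h
      have := hP.monotone (show n + 2 ≤ m by omega)
      rcases hx with rfl | rfl <;> linarith
    rcases (show m = n ∨ m = n + 1 by omega) with rfl | rfl <;> simp
  · rintro (rfl | rfl) <;> refine ⟨mem_range_self _, ?_, ?_⟩ <;> rcases hx with rfl | rfl <;>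
      linarith

end IntSequence

theorem exists_isometryEquiv_image_pair {u d x : ℝ} (hx : x = u ∨ x = u + d) :
    ∃ g : ℝ ≃ᵢ ℝ, g 0 = x ∧ g '' {0, d} = {u, u + d} := by
  rcases hx with rfl | rfl
  · exact ⟨.addRight x, by simp, by simp [image_pair, add_comm]⟩
  · exact ⟨.subLeft (u + d), by simp, by simp [image_pair, pair_comm]⟩

def altGap (R ρ : ℝ) (n : ℤ) : ℝ :=
  if Even n then ρ else ρ + (2 * R - ρ) / (1 + Real.exp n)

section AltGap

variable {R ρ : ℝ}

theorem altGap_of_even {n : ℤ} (hn : Even n) : altGap R ρ n = ρ := if_pos hn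

theorem lt_altGap_of_odd (hρR : ρ < 2 * R) {n : ℤ} (hn : Odd n) : ρ < altGap R ρ n := by
  rw [altGap, if_neg (Int.not_even_iff_odd.2 hn)]
  have := Real.exp_pos n
  have : 0 < (2 * R - ρ) / (1 + Real.exp n) := by apply div_pos <;> linarith
  linarith

theorem le_altGap (hρR : ρ < 2 * R) (n : ℤ) : ρ ≤ altGap R ρ n :=
  (Int.even_or_odd n).elim (fun h => (altGap_of_even h).ge) fun h => (lt_altGap_of_odd hρR h).le

theorem altGap_le (hρR : ρ < 2 * R) (n : ℤ) : altGap R ρ n ≤ 2 * R := by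
  unfold altGap
  split_ifs
  · linarith
  · have := div_le_self (sub_nonneg.2 hρR.le) (by linarith [Real.exp_pos n] : 1 ≤ 1 + Real.exp n)
    linarith

theorem altGap_injOn (hρR : ρ < 2 * R) : InjOn (altGap R ρ) {n | Odd n} := by
  intro m hm n hn h
  rw [altGap, altGap, if_neg (Int.not_even_iff_odd.2 hm), if_neg (Int.not_even_iff_odd.2 hn),
    add_right_inj, div_eq_div_iff (by positivity) (by positivity)] at h
  have h' := add_left_cancel (mul_left_cancel₀ (by linarith) h)
  exact_mod_cast (Real.exp_injective h').symm

end AltGap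

theorem clustersEquiv_range_of_gaps {P : ℤ → ℝ} {s : ℝ} (hP : StrictMono P)
    (heven : ∀ n, Even n → P (n + 1) - P n = s) (hodd : ∀ n, Odd n → s < P (n + 1) - P n) :
    ∀ x ∈ range P, ∀ y ∈ range P, ClustersEquiv (range P) x y s := by
  refine clustersEquiv_of_forall_exists (K := {0, s}) (o := 0) ?_
  rintro _ ⟨m, rfl⟩
  obtain ⟨n, hn, hm⟩ : ∃ n, Even n ∧ (P m = P n ∨ P m = P (n + 1)) := by
    rcases Int.even_or_odd m with h | h
    · exact ⟨m, h, .inl rfl⟩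
    · exact ⟨m - 1, by simpa using h.sub_odd odd_one, .inr (by simp)⟩
  have hleft := hodd (n - 1) (hn.sub_odd odd_one)
  have hright := hodd (n + 1) hn.add_one
  rw [sub_add_cancel] at hleft
  rw [add_assoc, one_add_one_eq_two] at hright
  have hsn : P (n + 1) = P n + s := by linarith [heven n hn]
  rw [hP.cluster_range_eq_pair (by linarith) hleft hright hm, hsn]
  rw [hsn] at hm
  exact exists_isometryEquiv_image_pair hm

theorem not_isRegularSystem_range {P : ℤ → ℝ} (hP : StrictMono P)
    (h₁ : P 2 - P 1 ≠ P 1 - P 0) (h₂ : P 2 - P 1 ≠ P 0 - P (-1)) :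
    ¬ IsRegularSystem (range P) := by
  intro hreg
  obtain ⟨g, hgX, hg⟩ := hreg (P 0) (mem_range_self 0) (P 1) (mem_range_self 1)
  have hequiv := clustersEquiv_of_image_eq g hgX (P 0) (s := P 1 - P (-1))
  rw [hg] at hequiv
  have hsucc := hP.isLeast_range_inter_Ioi 0
  have hpred := hP.isGreatest_range_inter_Iio 0
  have hsucc' := hP.isLeast_range_inter_Ioi 1
  have hpred' := hP.isGreatest_range_inter_Iio 1
  simp only [zero_add, zero_sub, one_add_one_eq_two, sub_self] at hsucc hpred hsucc' hpred'
  have := hP (show (-1 : ℤ) < 0 by norm_num)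
  have := hP (show (0 : ℤ) < 1 by norm_num)
  rcases hequiv.neighbour_gaps hsucc hpred hsucc' hpred' (by linarith) (by linarith) with
    ⟨h, -⟩ | ⟨h, -⟩
  · exact h₁ h
  · exact h₂ h

theorem exists_isDeloneSet_clustersEquiv_not_isRegularSystem {R ρ : ℝ} (hρ : 0 < ρ)
    (hρR : ρ < 2 * R) :
    ∃ r : ℝ, ∃ X : Set ℝ, 0 < r ∧ r ≤ ρ / 2 ∧ r < R ∧ IsDeloneSet X r R ∧
      (∀ x ∈ X, ∀ x' ∈ X, ClustersEquiv X x x' ρ) ∧ ¬ IsRegularSystem X := by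
  set P := intPartialSum (altGap R ρ)
  have hgap (n : ℤ) : P (n + 1) - P n = altGap R ρ n := by
    simp [P, intPartialSum_add_one]
  have hP : StrictMono P :=
    strictMono_int_of_lt_succ fun n => by linarith [hgap n, le_altGap hρR n]
  have hgap₀ : P 1 - P 0 = ρ := by simpa [altGap_of_even Even.zero] using hgap 0
  have hgap₁ : P 2 - P 1 = altGap R ρ 1 := by simpa [one_add_one_eq_two] using hgap 1
  have hgap_neg : P 0 - P (-1) = altGap R ρ (-1) := by simpa using hgap (-1)
  refine ⟨ρ / 2, range P, by positivity, le_rfl, by linarith,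
    isDeloneSet_range_of_gaps (by positivity) (fun n => by linarith [hgap n, le_altGap hρR n])
      (fun n => by linarith [hgap n, altGap_le hρR n]),
    clustersEquiv_range_of_gaps hP (fun n hn => (hgap n).trans (altGap_of_even hn))
      (fun n hn => (hgap n).symm ▸ lt_altGap_of_odd hρR hn),
    not_isRegularSystem_range hP ?_ ?_⟩
  · rw [hgap₁, hgap₀]
    exact (lt_altGap_of_odd hρR odd_one).ne'
  · rw [hgap₁, hgap_neg]
    exact (altGap_injOn hρR).ne odd_one (by decide) (by decide)

theorem regularityRadius_dim1_eq_general (R ρ : ℝ) (hρ : 0 < ρ) (hρR : ρ < 2 * R) :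
    (∃ r : ℝ, ∃ X : Set ℝ, 0 < r ∧ r ≤ ρ / 2 ∧ r < R ∧ IsDeloneSet X r R ∧
      (∀ x ∈ X, ∀ x' ∈ X, ClustersEquiv X x x' ρ) ∧ ¬ IsRegularSystem X) ∧
    (∀ (r : ℝ) (X : Set ℝ), 0 < r → r < R → IsDeloneSet X r R →
      (∀ x ∈ X, ∀ x' ∈ X, ClustersEquiv X x x' (2 * R)) → IsRegularSystem X) :=
  ⟨exists_isDeloneSet_clustersEquiv_not_isRegularSystem hρ hρR,
    fun _ _ hr _ hX hequiv => hX.isRegularSystem_of_clustersEquiv hr hequiv⟩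

/-- for any `0 < ρ < 2R` there is a Delone set of type `(r,R)` on the line
(for some `r ≤ ρ/2`) with mutually equivalent `ρ`-clusters which is not a regular system;
consequently (together with the `2R`-regularity statement) `ρ̂₁ = 2R`. -/
theorem regularityRadius_dim1_eq (R ρ : ℝ) (hR : 0 < R) (hρ : 0 < ρ) (hρR : ρ < 2 * R) :
    (∃ r : ℝ, ∃ X : Set ℝ, 0 < r ∧ r ≤ ρ / 2 ∧ r < R ∧ IsDeloneSet X r R ∧
      (∀ x ∈ X, ∀ x' ∈ X, ClustersEquiv X x x' ρ) ∧ ¬ IsRegularSystem X) ∧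
    (∀ (r : ℝ) (X : Set ℝ), 0 < r → r < R → IsDeloneSet X r R →
      (∀ x ∈ X, ∀ x' ∈ X, ClustersEquiv X x x' (2 * R)) → IsRegularSystem X) :=
  regularityRadius_dim1_eq_general R ρ hρ hρR
end
end

section
/- For d ≥ 2, any doubly-infinite integer sequence A satisfying (A1)–(A3), and any positive reals a, b, δ with b > a, the Engel set X(A,a,b,δ) ⊂ ℝ^d is a Delone set of type (a, √(b² + (d-1)a²)): every open ball of radius a contains at most one point of X, and every closed ball of radius √(b² + (d-1)a²) contains at least one point of X. -/
noncomputable section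
open scoped Pointwise

/-! The shifts `δ u_i` are horizontal, so each layer `X_m` is a translate of the grid
`2aℤ^{d-1} × {0}` lifted to height `2bm`. Two distinct points therefore differ by a nonzero
multiple of `2a` in a horizontal coordinate (same layer) or of `2b ≥ 2a` in the last one, which
gives the packing radius `a`. For the covering radius, round the height of a point to the nearest
layer and then its horizontal coordinates to the nearest grid point of that layer: the coordinate
errors are at most `b` once and `a` in the `d - 1` other coordinates. -/

open Metric

lemma subsingleton_inter_ball_of_two_mul_le_dist {V : Type*} [PseudoMetricSpace V]
    {X : Set V} {r : ℝ} (hX : ∀ x ∈ X, ∀ x' ∈ X, x ≠ x' → 2 * r ≤ dist x x') (y : V) :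
    (X ∩ ball y r).Subsingleton := by
  rintro x ⟨hxX, hxy⟩ x' ⟨hx'X, hx'y⟩
  by_contra hne
  have := hX x hxX x' hx'X hne
  have := dist_triangle_right x x' y
  rw [mem_ball] at hxy hx'y
  linarith

lemma EuclideanSpace.dist_le_sqrt_of_abs_sub_apply_le {ι : Type*} [Fintype ι]
    {x y : EuclideanSpace ℝ ι} {c : ι → ℝ} (h : ∀ j, |x j - y j| ≤ c j) :
    dist x y ≤ √(∑ j, c j ^ 2) := by
  rw [EuclideanSpace.dist_eq]
  gcongr with j
  rw [Real.dist_eq]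
  exact h j

lemma le_abs_mul_intCast_sub_mul_intCast (c : ℝ) {n n' : ℤ} (h : n ≠ n') :
    c ≤ |c * n - c * n'| := by
  have : (1 : ℝ) ≤ |(n : ℝ) - n'| := by exact_mod_cast Int.one_le_abs (sub_ne_zero.mpr h)
  calc c ≤ |c| := le_abs_self c
    _ ≤ |c| * |(n : ℝ) - n'| := le_mul_of_one_le_right (abs_nonneg c) this
    _ = |c * n - c * n'| := by rw [← abs_mul, mul_sub]

lemma abs_sub_mul_round_div_le {c : ℝ} (hc : 0 < c) (t : ℝ) :
    |t - c * round (t / c)| ≤ c / 2 := by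
  have h : t - c * round (t / c) = c * (t / c - round (t / c)) := by
    field_simp
  rw [h, abs_mul, abs_of_pos hc]
  linarith [mul_le_mul_of_nonneg_left (abs_sub_round (t / c)) hc.le]

lemma Fin.sum_ite_val_eq_sub_one {M : Type*} [AddCommMonoid M] {d : ℕ} (hd : 1 ≤ d) (u v : M) :
    ∑ j : Fin d, (if (j : ℕ) = d - 1 then u else v) = u + (d - 1) • v := by
  obtain ⟨n, rfl⟩ := Nat.exists_eq_add_of_le' hd
  simp [Fin.sum_univ_castSucc, Fin.val_castSucc, (Fin.is_lt _).ne, add_comm]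

section Engel

variable {d : ℕ} {A : ℤ → ℤ}

lemma engelU_apply_last (hd : 2 ≤ d) (hA : ∀ i, (A i).natAbs ≤ d - 1) (i : ℤ)
    (j : Fin d) (hj : (j : ℕ) = d - 1) : engelU d A i j = 0 := by
  have hAi := hA i
  have hlt : (A i).natAbs - 1 < d := by omega
  have hne : j ≠ ⟨(A i).natAbs - 1, hlt⟩ := Fin.ne_of_val_ne (by dsimp only; omega)
  simp only [engelU, eVec, dif_pos hlt, PiLp.smul_apply, PiLp.single_apply, if_neg hne,
    smul_zero]

lemma engelCum_apply_last (hd : 2 ≤ d) (hA : ∀ i, (A i).natAbs ≤ d - 1) (i : ℤ)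
    (j : Fin d) (hj : (j : ℕ) = d - 1) : engelCum d A i j = 0 := by
  unfold engelCum
  split <;> simp [WithLp.ofLp_sum, engelU_apply_last hd hA _ j hj]

lemma engelOffset_apply_last (hd : 2 ≤ d) (hA : ∀ i, (A i).natAbs ≤ d - 1) (b δ : ℝ) (m : ℤ)
    (j : Fin d) (hj : (j : ℕ) = d - 1) : engelOffset d A b δ m j = 2 * b * m := by
  simp [engelOffset, engelCum_apply_last hd hA _ j hj, eVec, hj, Fin.ext_iff,
    show d - 1 < d by omega]

lemma mem_engelSet_iff {a b δ : ℝ} {x : Euc d} :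
    x ∈ engelSet d A a b δ ↔ ∃ m : ℤ, ∃ g ∈ engelGrid d a, x = engelOffset d A b δ m + g := by
  simp only [engelSet, engelLayer, Set.mem_iUnion, Set.mem_vadd_set, vadd_eq_add, eq_comm]

lemma engelOffset_add_apply_last (hd : 2 ≤ d) (hA : ∀ i, (A i).natAbs ≤ d - 1) {a : ℝ}
    (b δ : ℝ) (m : ℤ) {g : Euc d} (hg : g ∈ engelGrid d a) (j : Fin d) (hj : (j : ℕ) = d - 1) :
    (engelOffset d A b δ m + g) j = 2 * b * m := by
  rw [PiLp.add_apply, engelOffset_apply_last hd hA b δ m j hj, (hg j).2 hj, add_zero]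

lemma engelSet_two_mul_le_dist (hd : 2 ≤ d) (hA : ∀ i, (A i).natAbs ≤ d - 1) {a b : ℝ}
    (hab : a ≤ b) (δ : ℝ) : ∀ x ∈ engelSet d A a b δ, ∀ x' ∈ engelSet d A a b δ,
      x ≠ x' → 2 * a ≤ dist x x' := by
  intro x hx x' hx' hne
  obtain ⟨m, g, hg, rfl⟩ := mem_engelSet_iff.mp hx
  obtain ⟨m', g', hg', rfl⟩ := mem_engelSet_iff.mp hx'
  by_cases hm : m = m'
  · subst hm
    obtain ⟨j, hj⟩ : ∃ j, g j ≠ g' j := by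
      by_contra! h
      exact hne (congrArg _ (PiLp.ext h))
    have hjlt : (j : ℕ) < d - 1 := by
      by_contra hj'
      exact hj (by rw [(hg j).2 (by omega), (hg' j).2 (by omega)])
    obtain ⟨n, hn⟩ := (hg j).1 hjlt
    obtain ⟨n', hn'⟩ := (hg' j).1 hjlt
    have hnn' : n ≠ n' := by
      rintro rfl
      exact hj (hn.trans hn'.symm)
    calc 2 * a ≤ |2 * a * n - 2 * a * n'| := le_abs_mul_intCast_sub_mul_intCast _ hnn'
      _ = dist ((engelOffset d A b δ m + g) j) ((engelOffset d A b δ m + g') j) := by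
        simp only [PiLp.add_apply, Real.dist_eq, hn, hn', add_sub_add_left_eq_sub]
      _ ≤ _ := PiLp.dist_apply_le _ _ j
  · let last : Fin d := ⟨d - 1, by omega⟩
    calc 2 * a ≤ 2 * b := by linarith
      _ ≤ |2 * b * m - 2 * b * m'| := le_abs_mul_intCast_sub_mul_intCast _ hm
      _ = dist ((engelOffset d A b δ m + g) last) ((engelOffset d A b δ m' + g') last) := by
        rw [engelOffset_add_apply_last hd hA b δ m hg last rfl,
          engelOffset_add_apply_last hd hA b δ m' hg' last rfl, Real.dist_eq]
      _ ≤ _ := PiLp.dist_apply_le _ _ last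

lemma exists_mem_engelSet_abs_sub_apply_le (hd : 2 ≤ d) (hA : ∀ i, (A i).natAbs ≤ d - 1)
    {a b : ℝ} (ha : 0 < a) (hb : 0 < b) (δ : ℝ) (y : Euc d) :
    ∃ x ∈ engelSet d A a b δ, ∀ j : Fin d, |y j - x j| ≤ if (j : ℕ) = d - 1 then b else a := by
  let last : Fin d := ⟨d - 1, by omega⟩
  let o := engelOffset d A b δ (round (y last / (2 * b)))
  let g : Euc d := WithLp.toLp 2 fun j =>
    if (j : ℕ) = d - 1 then 0 else 2 * a * round ((y j - o j) / (2 * a))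
  have hg : g ∈ engelGrid d a := fun j => ⟨fun hj => ⟨_, if_neg hj.ne⟩, fun hj => if_pos hj⟩
  refine ⟨o + g, mem_engelSet_iff.mpr ⟨_, g, hg, rfl⟩, fun j => ?_⟩
  split_ifs with hj
  · obtain rfl : j = last := Fin.ext hj
    rw [engelOffset_add_apply_last hd hA b δ _ hg last rfl]
    exact (abs_sub_mul_round_div_le (by positivity) _).trans_eq (by ring)
  · have hgj : (o + g) j = o j + 2 * a * round ((y j - o j) / (2 * a)) := by
      simp only [g, PiLp.add_apply, if_neg hj]
    rw [hgj, ← sub_sub]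
    exact (abs_sub_mul_round_div_le (by positivity) _).trans_eq (by ring)

end Engel

theorem engelSet_isDelone_general (d : ℕ) (hd : 2 ≤ d) (A : ℤ → ℤ) (hA : EngelSeq d A)
    (a b δ : ℝ) (ha : 0 < a) (hab : a < b) :
    IsDeloneSet (engelSet d A a b δ) a (Real.sqrt (b ^ 2 + ((d : ℝ) - 1) * a ^ 2)) := by
  have hA' : ∀ i, (A i).natAbs ≤ d - 1 := fun i => (hA.1 i).2
  refine ⟨subsingleton_inter_ball_of_two_mul_le_dist
    (engelSet_two_mul_le_dist hd hA' hab.le δ), fun y => ?_⟩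
  obtain ⟨x, hxX, hx⟩ := exists_mem_engelSet_abs_sub_apply_le hd hA' ha (ha.trans hab) δ y
  have hsum : ∑ j : Fin d, (if (j : ℕ) = d - 1 then b else a) ^ 2
      = b ^ 2 + ((d : ℝ) - 1) * a ^ 2 := by
    simp only [ite_pow, Fin.sum_ite_val_eq_sub_one (by omega : 1 ≤ d), nsmul_eq_mul,
      Nat.cast_pred (by omega : 0 < d)]
  refine ⟨x, hxX, ?_⟩
  rw [mem_closedBall, dist_comm, ← hsum]
  exact EuclideanSpace.dist_le_sqrt_of_abs_sub_apply_le hx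

/-- for `b > a > 0`, the Engel set `X(A,a,b,δ)` is a Delone set of
type `(a, √(b² + (d-1)a²))`. -/
theorem engelSet_isDelone (d : ℕ) (hd : 2 ≤ d) (A : ℤ → ℤ) (hA : EngelSeq d A)
    (a b δ : ℝ) (ha : 0 < a) (hab : a < b) (hδ : 0 < δ) :
    IsDeloneSet (engelSet d A a b δ) a (Real.sqrt (b ^ 2 + ((d : ℝ) - 1) * a ^ 2)) :=
  engelSet_isDelone_general d hd A hA a b δ ha hab
end
end

section
/- In an Engel set X(A,a,b,δ) with b > a, the minimal distance between any two distinct points of X is 2a. -/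
noncomputable section
open scoped Pointwise

section EngelAux

lemma coord_dist_le {d : ℕ} (x y : Euc d) (i : Fin d) : dist (x i) (y i) ≤ dist x y := by
  rw [EuclideanSpace.dist_eq, ← Real.sqrt_sq (dist_nonneg : (0:ℝ) ≤ dist (x i) (y i))]
  exact Real.sqrt_le_sqrt (Finset.single_le_sum (f := fun j => dist (x j) (y j) ^ 2)
    (fun j _ => sq_nonneg _) (Finset.mem_univ i))

lemma engelU_last {d : ℕ} (hd : 2 ≤ d) (A : ℤ → ℤ) (hA : EngelSeq d A) (i : ℤ) :
    engelU d A i ⟨d - 1, by omega⟩ = 0 := by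
  obtain ⟨h1, h2⟩ := hA.1 i
  have hz : eVec d (A i).natAbs ⟨d - 1, by omega⟩ = 0 := by
    unfold eVec
    rw [dif_pos (by omega : (A i).natAbs - 1 < d), EuclideanSpace.single_apply,
      if_neg (Fin.ne_of_val_ne (show d - 1 ≠ (A i).natAbs - 1 by omega))]
  unfold engelU
  rw [PiLp.smul_apply, hz, smul_zero]

lemma engelCum_last {d : ℕ} (hd : 2 ≤ d) (A : ℤ → ℤ) (hA : EngelSeq d A) (i : ℤ) :
    engelCum d A i ⟨d - 1, by omega⟩ = 0 := by
  have key : ∀ (n : ℕ) (f : ℕ → Euc d), (∀ j, f j ⟨d - 1, by omega⟩ = 0) →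
      (∑ j ∈ Finset.range n, f j) ⟨d - 1, by omega⟩ = 0 := by
    intro n f hf
    induction n with
    | zero => simp [PiLp.zero_apply]
    | succ n ih => rw [Finset.sum_range_succ, PiLp.add_apply, ih, hf]; ring
  unfold engelCum
  split
  · exact key _ _ (fun j => engelU_last hd A hA _)
  · rw [PiLp.neg_apply, key _ _ (fun j => engelU_last hd A hA _)]; ring

lemma engelOffset_last {d : ℕ} (hd : 2 ≤ d) (A : ℤ → ℤ) (hA : EngelSeq d A) (b δ : ℝ) (m : ℤ) :
    engelOffset d A b δ m ⟨d - 1, by omega⟩ = 2 * b * (m : ℝ) := by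
  unfold engelOffset
  rw [PiLp.add_apply, PiLp.smul_apply, PiLp.smul_apply, engelCum_last hd A hA]
  unfold eVec
  rw [dif_pos (by omega : d - 1 < d), EuclideanSpace.single_apply, if_pos rfl]
  simp

end EngelAux

/-- in an Engel set with `b > a`, the minimal distance between two
distinct points is `2a` (it is a lower bound, and it is attained). -/
theorem engelSet_minDist (d : ℕ) (hd : 2 ≤ d) (A : ℤ → ℤ) (hA : EngelSeq d A)
    (a b δ : ℝ) (ha : 0 < a) (hab : a < b) (hδ : 0 < δ) :
    (∀ x ∈ engelSet d A a b δ, ∀ y ∈ engelSet d A a b δ, x ≠ y → 2 * a ≤ dist x y) ∧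
    (∃ x ∈ engelSet d A a b δ, ∃ y ∈ engelSet d A a b δ, x ≠ y ∧ dist x y = 2 * a) := by
  have hd1 : d - 1 < d := by omega
  constructor
  · rintro x hx y hy hxy
    simp only [engelSet, Set.mem_iUnion] at hx hy
    obtain ⟨m, hx⟩ := hx
    obtain ⟨n, hy⟩ := hy
    rw [engelLayer, Set.mem_vadd_set] at hx hy
    obtain ⟨g, hg, rfl⟩ := hx
    obtain ⟨g', hg', rfl⟩ := hy
    simp only [vadd_eq_add] at hxy ⊢
    by_cases hmn : m = n
    · subst hmn
      have hgg : g ≠ g' := fun h => hxy (by rw [h])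
      obtain ⟨j, hj⟩ : ∃ j, g j ≠ g' j := by
        by_contra h
        push_neg at h
        exact hgg (PiLp.ext h)
      have hjlt : (j : ℕ) < d - 1 := by
        rcases lt_or_ge (j : ℕ) (d - 1) with h | h
        · exact h
        · have hj' : (j : ℕ) = d - 1 := by have := j.isLt; omega
          exact absurd (((hg j).2 hj').trans (((hg' j).2 hj').symm)) hj
      obtain ⟨p, hp⟩ := (hg j).1 hjlt
      obtain ⟨q, hq⟩ := (hg' j).1 hjlt
      have hkey : 2 * a ≤ dist (g j) (g' j) := by
        rw [hp, hq, Real.dist_eq]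
        have heq : 2 * a * (p : ℝ) - 2 * a * (q : ℝ) = 2 * a * ((p : ℝ) - q) := by ring
        rw [heq, abs_mul]
        have hpq : (1:ℝ) ≤ |(p : ℝ) - q| := by
          have hne : p ≠ q := fun h => hj (by rw [hp, hq, h])
          have h1 : (1:ℤ) ≤ |p - q| := Int.one_le_abs (sub_ne_zero.mpr hne)
          calc (1:ℝ) ≤ |((p - q : ℤ) : ℝ)| := by exact_mod_cast h1
            _ = |(p:ℝ) - (q:ℝ)| := by push_cast; rfl
        have : |2 * a| = 2 * a := abs_of_pos (by linarith)
        nlinarith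
      calc 2 * a ≤ dist (g j) (g' j) := hkey
        _ = dist ((engelOffset d A b δ m + g) j) ((engelOffset d A b δ m + g') j) := by
            rw [PiLp.add_apply, PiLp.add_apply, Real.dist_eq, Real.dist_eq]
            ring_nf
        _ ≤ _ := coord_dist_le _ _ j
    · set jd : Fin d := ⟨d - 1, hd1⟩ with hjd
      have hx1 : (engelOffset d A b δ m + g) jd = 2 * b * (m : ℝ) := by
        rw [PiLp.add_apply, engelOffset_last hd A hA, (hg jd).2 rfl, add_zero]
      have hy1 : (engelOffset d A b δ n + g') jd = 2 * b * (n : ℝ) := by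
        rw [PiLp.add_apply, engelOffset_last hd A hA, (hg' jd).2 rfl, add_zero]
      have hkey : 2 * b ≤ dist ((engelOffset d A b δ m + g) jd) ((engelOffset d A b δ n + g') jd) := by
        rw [hx1, hy1, Real.dist_eq]
        have heq : 2 * b * (m : ℝ) - 2 * b * (n : ℝ) = 2 * b * ((m : ℝ) - n) := by ring
        rw [heq, abs_mul]
        have hmn1 : (1:ℝ) ≤ |(m : ℝ) - n| := by
          have h1 : (1:ℤ) ≤ |m - n| := Int.one_le_abs (sub_ne_zero.mpr hmn)
          calc (1:ℝ) ≤ |((m - n : ℤ) : ℝ)| := by exact_mod_cast h1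
            _ = |(m:ℝ) - (n:ℝ)| := by push_cast; rfl
        have : |2 * b| = 2 * b := abs_of_pos (by linarith)
        nlinarith
      calc 2 * a ≤ 2 * b := by linarith
        _ ≤ dist ((engelOffset d A b δ m + g) jd) ((engelOffset d A b δ n + g') jd) := hkey
        _ ≤ _ := coord_dist_le _ _ jd
  · have h0lt : (0 : ℕ) < d := by omega
    have heV : eVec d 1 = EuclideanSpace.single (⟨0, h0lt⟩ : Fin d) (1 : ℝ) := by
      unfold eVec
      rw [dif_pos (by omega : 1 - 1 < d)]
    have hoff0 : engelOffset d A b δ 0 = 0 := by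
      unfold engelOffset engelCum
      norm_num
    have h0mem : (0 : Euc d) ∈ engelSet d A a b δ := by
      simp only [engelSet, Set.mem_iUnion]
      refine ⟨0, ?_⟩
      rw [engelLayer, Set.mem_vadd_set]
      refine ⟨0, ?_, by rw [vadd_eq_add, hoff0, add_zero]⟩
      intro j
      constructor
      · intro _
        exact ⟨0, by rw [PiLp.zero_apply]; push_cast; ring⟩
      · intro _
        rw [PiLp.zero_apply]
    set y : Euc d := (2 * a) • eVec d 1 with hy
    have hyco : ∀ j : Fin d, y j = if j = (⟨0, h0lt⟩ : Fin d) then 2 * a else 0 := by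
      intro j
      rw [hy, PiLp.smul_apply, heV, EuclideanSpace.single_apply]
      split <;> simp
    have hymem : y ∈ engelSet d A a b δ := by
      simp only [engelSet, Set.mem_iUnion]
      refine ⟨0, ?_⟩
      rw [engelLayer, Set.mem_vadd_set]
      refine ⟨y, ?_, by rw [vadd_eq_add, hoff0, zero_add]⟩
      intro j
      constructor
      · intro _
        rw [hyco j]
        by_cases hj : j = (⟨0, h0lt⟩ : Fin d)
        · exact ⟨1, by rw [if_pos hj]; push_cast; ring⟩
        · exact ⟨0, by rw [if_neg hj]; push_cast; ring⟩
      · intro hjv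
        rw [hyco j, if_neg]
        intro h
        have := congrArg Fin.val h
        simp only [Fin.val_mk] at this
        omega
    refine ⟨0, h0mem, y, hymem, ?_, ?_⟩
    · intro h
      have := congrArg (fun v : Euc d => v (⟨0, h0lt⟩ : Fin d)) h
      simp only [PiLp.zero_apply] at this
      rw [hyco] at this
      simp at this
      linarith
    · rw [dist_comm, dist_zero_right, hy, norm_smul, heV, EuclideanSpace.norm_single]
      rw [norm_one, mul_one, Real.norm_eq_abs, abs_of_pos (by linarith)]
end
end

section
/- The point y = (b, a, a, …, a) ∈ ℝ^d is at distance exactly √(b² + (d-1)a²) from the Engel set X(A,a,b,δ) when b > a > δ > 0; i.e., the empty-ball radius bound R = √(b² + (d-1)a²) for Engel sets is sharp. -/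
noncomputable section
open scoped Pointwise

/-! The origin lies in `X₀` at distance `√(b² + (d-1)a²)` from `y`. For a point `x` of `X_m`,
the vertical gap gives `b²(2m-1)² = b² + 4b²m(m-1)`. Each horizontal coordinate of `x` is a point
of `2aℤ` (at distance `≥ a` from the coordinate `a` of `y`) shifted by `δ` times a coordinate of
`u₁ + ⋯ + u_{⌊m/2⌋}`, a vector of `ℓ¹`-norm at most `|⌊m/2⌋|`. So the horizontal part loses at
most `2aδ|⌊m/2⌋|`, which the vertical excess `4b²m(m-1)` covers because `aδ ≤ b²`. -/

lemma eVec_apply_of_eq {d k : ℕ} {j : Fin d} (h : (j : ℕ) + 1 = k) : eVec d k j = 1 := by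
  subst h
  simp [eVec]

lemma eVec_apply_of_ne {d k : ℕ} {j : Fin d} (h : (j : ℕ) ≠ k - 1) : eVec d k j = 0 := by
  unfold eVec
  split_ifs
  · simp [Fin.ext_iff, h]
  · rfl

lemma sum_abs_eVec_le (d k : ℕ) : ∑ j, |eVec d k j| ≤ 1 := by
  unfold eVec
  split_ifs
  · simp [apply_ite]
  · simp

lemma sum_abs_engelU_le (d : ℕ) (A : ℤ → ℤ) (i : ℤ) : ∑ j, |engelU d A i j| ≤ 1 := by
  have hsign : |(if 0 < A i then (1 : ℝ) else -1)| = 1 := by split_ifs <;> simp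
  simpa only [engelU, PiLp.smul_apply, smul_eq_mul, abs_mul, hsign, one_mul]
    using sum_abs_eVec_le d (A i).natAbs

lemma sum_abs_sum_apply_le_card {d : ℕ} {ι : Type*} (s : Finset ι) (f : ι → Euc d)
    (hf : ∀ t ∈ s, ∑ j, |f t j| ≤ 1) : ∑ j, |(∑ t ∈ s, f t) j| ≤ s.card := calc
  ∑ j, |(∑ t ∈ s, f t) j| ≤ ∑ j, ∑ t ∈ s, |f t j| := by
    simp only [WithLp.ofLp_sum, Finset.sum_apply]
    exact Finset.sum_le_sum fun j _ => Finset.abs_sum_le_sum_abs _ _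
  _ = ∑ t ∈ s, ∑ j, |f t j| := Finset.sum_comm
  _ ≤ ∑ t ∈ s, 1 := Finset.sum_le_sum hf
  _ = s.card := by simp

lemma sum_abs_engelCum_le (d : ℕ) (A : ℤ → ℤ) (i : ℤ) :
    ∑ j, |engelCum d A i j| ≤ i.natAbs := by
  unfold engelCum
  split_ifs with hi
  · calc _ ≤ ((Finset.range i.toNat).card : ℝ) :=
          sum_abs_sum_apply_le_card _ _ fun t _ => sum_abs_engelU_le d A _
      _ = i.natAbs := by rw [Finset.card_range]; congr 1; omega
  · calc _ ≤ ((Finset.range (-i).toNat).card : ℝ) := by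
          simpa only [PiLp.neg_apply, abs_neg]
            using sum_abs_sum_apply_le_card _ _ fun t _ => sum_abs_engelU_le d A _
      _ = i.natAbs := by rw [Finset.card_range]; congr 1; omega

lemma engelU_apply_of_eq {d : ℕ} {A : ℤ → ℤ}
    (hA : ∀ i, 1 ≤ (A i).natAbs ∧ (A i).natAbs ≤ d - 1) (i : ℤ) {j : Fin d}
    (hj : (j : ℕ) = d - 1) : engelU d A i j = 0 := by
  have := hA i
  rw [engelU, PiLp.smul_apply, eVec_apply_of_ne (by omega), smul_zero]

lemma engelCum_apply_of_eq {d : ℕ} {A : ℤ → ℤ}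
    (hA : ∀ i, 1 ≤ (A i).natAbs ∧ (A i).natAbs ≤ d - 1) (i : ℤ) {j : Fin d}
    (hj : (j : ℕ) = d - 1) : engelCum d A i j = 0 := by
  unfold engelCum
  split_ifs <;> simp [WithLp.ofLp_sum, Finset.sum_apply, engelU_apply_of_eq hA _ hj]

lemma zero_mem_engelGrid (d : ℕ) (a : ℝ) : (0 : Euc d) ∈ engelGrid d a :=
  fun _ => ⟨fun _ => ⟨0, by simp⟩, fun _ => rfl⟩

lemma engelOffset_zero (d : ℕ) (A : ℤ → ℤ) (b δ : ℝ) : engelOffset d A b δ 0 = 0 := by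
  simp [engelOffset, engelCum]

lemma zero_mem_engelSet (d : ℕ) (A : ℤ → ℤ) (a b δ : ℝ) : (0 : Euc d) ∈ engelSet d A a b δ :=
  Set.mem_iUnion.2 ⟨0, Set.mem_vadd_set.2 ⟨0, zero_mem_engelGrid d a, by simp [engelOffset_zero]⟩⟩

lemma le_abs_sub_two_mul_mul_intCast {a : ℝ} (ha : 0 ≤ a) (k : ℤ) : a ≤ |a - 2 * a * k| := by
  have hk : 1 ≤ |1 - 2 * (k : ℝ)| := by
    exact_mod_cast Int.one_le_abs (show 1 - 2 * k ≠ 0 by omega)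
  calc a = a * 1 := (mul_one a).symm
    _ ≤ a * |1 - 2 * (k : ℝ)| := mul_le_mul_of_nonneg_left hk ha
    _ = |a * (1 - 2 * (k : ℝ))| := by rw [abs_mul, abs_of_nonneg ha]
    _ = |a - 2 * a * k| := by ring_nf

lemma sq_sub_two_mul_abs_le_sq_sub {a u e : ℝ} (ha : 0 ≤ a) (hu : a ≤ |u|) :
    a ^ 2 - 2 * a * |e| ≤ (u - e) ^ 2 := by
  rcases le_total |e| a with he | he
  · have h : a - |e| ≤ |u - e| := by linarith [abs_sub_abs_le_abs_sub u e]
    nlinarith [sq_abs (u - e), sq_nonneg |e|, mul_self_le_mul_self (by linarith) h]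
  · nlinarith [sq_nonneg (u - e)]

lemma two_mul_natAbs_ediv_two_le (m : ℤ) : 2 * ((m / 2).natAbs : ℝ) ≤ (1 - 2 * m) ^ 2 - 1 := by
  have h : 2 * ((m / 2).natAbs : ℤ) ≤ (1 - 2 * m) ^ 2 - 1 := by
    rcases le_or_gt m 0 with hm | hm
    · nlinarith [show ((m / 2).natAbs : ℤ) ≤ -m by omega]
    · nlinarith [show ((m / 2).natAbs : ℤ) ≤ m - 1 by omega]
  simpa using (Int.cast_le (R := ℝ)).2 h

lemma engelLayer_apply_last {n : ℕ} {A : ℤ → ℤ}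
    (hA : ∀ i, 1 ≤ (A i).natAbs ∧ (A i).natAbs ≤ n) {a b δ : ℝ} {m : ℤ} {x : Euc (n + 1)}
    (hx : x ∈ engelLayer (n + 1) A a b δ m) : x (Fin.last n) = 2 * b * m := by
  obtain ⟨g, hg, rfl⟩ := Set.mem_vadd_set.1 hx
  have hc := engelCum_apply_of_eq (d := n + 1) hA (m / 2) (j := Fin.last n) (by simp)
  simp [engelOffset, eVec_apply_of_eq, hc, (hg (Fin.last n)).2]

lemma exists_engelLayer_apply_castSucc {n : ℕ} {A : ℤ → ℤ} {a b δ : ℝ} {m : ℤ}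
    {x : Euc (n + 1)} (hx : x ∈ engelLayer (n + 1) A a b δ m) (i : Fin n) :
    ∃ k : ℤ, x i.castSucc = δ * engelCum (n + 1) A (m / 2) i.castSucc + 2 * a * k := by
  obtain ⟨g, hg, rfl⟩ := Set.mem_vadd_set.1 hx
  obtain ⟨k, hk⟩ := (hg i.castSucc).1 (by simp)
  exact ⟨k, by simp [engelOffset, eVec_apply_of_ne, hk, i.isLt.ne]⟩

lemma sq_add_mul_sq_le_sum_sq_sub_of_mem_engelSet {n : ℕ} {A : ℤ → ℤ}
    (hA : ∀ i, 1 ≤ (A i).natAbs ∧ (A i).natAbs ≤ n) {a b δ : ℝ} (ha : 0 ≤ a) (hδ : 0 ≤ δ)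
    (hb : a * δ ≤ b ^ 2) {y : Euc (n + 1)} (hy_last : y (Fin.last n) = b)
    (hy : ∀ i : Fin n, y i.castSucc = a) {x : Euc (n + 1)} (hx : x ∈ engelSet (n + 1) A a b δ) :
    b ^ 2 + n * a ^ 2 ≤ ∑ j, (y j - x j) ^ 2 := by
  obtain ⟨m, hm⟩ := Set.mem_iUnion.1 hx
  set c := engelCum (n + 1) A (m / 2)
  set s : ℝ := ((m / 2).natAbs : ℝ)
  have hvert : b ^ 2 + 2 * a * δ * s ≤ (y (Fin.last n) - x (Fin.last n)) ^ 2 := by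
    rw [hy_last, engelLayer_apply_last hA hm]
    nlinarith [mul_le_mul_of_nonneg_left (two_mul_natAbs_ediv_two_le m) (sq_nonneg b),
      mul_le_mul_of_nonneg_right hb (Nat.cast_nonneg (α := ℝ) (m / 2).natAbs)]
  have hhor (i : Fin n) :
      a ^ 2 - 2 * a * δ * |c i.castSucc| ≤ (y i.castSucc - x i.castSucc) ^ 2 := by
    obtain ⟨k, hk⟩ := exists_engelLayer_apply_castSucc hm i
    have := sq_sub_two_mul_abs_le_sq_sub ha (le_abs_sub_two_mul_mul_intCast ha k)
      (e := δ * c i.castSucc)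
    rw [abs_mul, abs_of_nonneg hδ] at this
    rw [hy, hk]
    linarith
  have hc : ∑ i : Fin n, |c i.castSucc| ≤ s := by
    have := sum_abs_engelCum_le (n + 1) A (m / 2)
    rw [Fin.sum_univ_castSucc] at this
    linarith [abs_nonneg (c (Fin.last n))]
  have hhor_sum : n * a ^ 2 - 2 * a * δ * s ≤ ∑ i : Fin n, (y i.castSucc - x i.castSucc) ^ 2 :=
    calc _ ≤ ∑ i : Fin n, (a ^ 2 - 2 * a * δ * |c i.castSucc|) := by
          rw [Finset.sum_sub_distrib, ← Finset.mul_sum]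
          simp only [Finset.sum_const, Finset.card_univ, Fintype.card_fin, nsmul_eq_mul]
          nlinarith [mul_nonneg ha hδ]
      _ ≤ _ := Finset.sum_le_sum fun i _ => hhor i
  rw [Fin.sum_univ_castSucc]
  linarith

/-- the point `y = (a, …, a, b)` (with `d-1` coordinates equal to `a` and
last coordinate `b`), lying halfway between layers `X₀` and `X₁`, is at distance exactly
`√(b² + (d-1)a²)` from the Engel set: the empty-ball radius bound is sharp. -/
theorem engelSet_R_sharp (d : ℕ) (hd : 2 ≤ d) (A : ℤ → ℤ) (hA : EngelSeq d A)
    (a b δ : ℝ) (hδ : 0 < δ) (hδa : δ < a) (hab : a < b)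
    (y : Euc d) (hy : ∀ j : Fin d, y j = if (j : ℕ) = d - 1 then b else a) :
    Metric.infDist y (engelSet d A a b δ) = Real.sqrt (b ^ 2 + ((d : ℝ) - 1) * a ^ 2) := by
  obtain ⟨n, rfl⟩ : ∃ n, d = n + 1 := ⟨d - 1, by omega⟩
  have hy_last : y (Fin.last n) = b := by simp [hy]
  have hy_castSucc (i : Fin n) : y i.castSucc = a := by simp [hy, i.isLt.ne]
  have hdist (x : Euc (n + 1)) : dist y x = √(∑ j, (y j - x j) ^ 2) := by
    simp [EuclideanSpace.dist_eq, Real.dist_eq, sq_abs]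
  have hR : (((n + 1 : ℕ) : ℝ) - 1) = n := by push_cast; ring
  rw [hR]
  refine le_antisymm ((Metric.infDist_le_dist_of_mem (zero_mem_engelSet _ A a b δ)).trans ?_)
    ((Metric.le_infDist ⟨0, zero_mem_engelSet _ A a b δ⟩).2 fun x hx => ?_)
  · simp [hdist, Fin.sum_univ_castSucc, hy_last, hy_castSucc, add_comm]
  · rw [hdist]
    exact Real.sqrt_le_sqrt <| sq_add_mul_sq_le_sum_sq_sub_of_mem_engelSet (n := n) hA.1
      (by linarith) hδ.le (by nlinarith) hy_last hy_castSucc hx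
end
end

section
/- If ρ > 0 is such that for every p ∈ ℤ and every x in layer X_p of an Engel set X the ρ-cluster C_x(ρ) contains only points from layers X_l with |l − p| ≤ d − 1, then all ρ-clusters of X are mutually equivalent, i.e., N_X(ρ) = 1. -/
noncomputable section
open scoped Pointwise

/-!
For every `p` there is an isometry `g x = L x + w` with `g (O_p) = O_{p+1}` that maps the
layer `X_{p+t}` onto `X_{p+1-t}` for `|t| ≤ d - 1`: here `L` is a signed permutation of the
coordinates that preserves the grid `2aℤ^{d-1} × {0}`, reverses `e_d`, and sends `uᵢ` to
`-u_{p+1-i}` for the `d - 1` indices `i` with `p - d + 2 ≤ 2i ≤ p + d - 1`. Such an `L` exists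
because, by (A1)–(A3), any `d - 1` consecutive values `|aᵢ|` are a permutation of `1, …, d - 1`.
By the locality hypothesis the `ρ`-clusters at `O_p` and `O_{p+1}` only see these layers, so `g`
carries one onto the other. Grid translations are symmetries of `X` moving any point of `X_m` to
`O_m`, and chaining over `p` gives the claim.
-/

open Set Metric

section Clusters

variable {V : Type*} [MetricSpace V] {X Y Y' : Set V} {x x' : V} {ρ : ℝ}

theorem clustersEquiv_equivalence (X : Set V) (ρ : ℝ) :
    Equivalence fun x x' => ClustersEquiv X x x' ρ where
  refl x := ⟨IsometryEquiv.refl V, rfl, image_id _⟩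
  symm := fun ⟨g, hgx, hg⟩ => ⟨g.symm, by rw [← hgx, g.symm_apply_apply], by
    rw [← hg, ← image_comp, g.symm_comp_self, image_id]⟩
  trans := fun ⟨g, hgx, hg⟩ ⟨g', hgx', hg'⟩ =>
    ⟨g.trans g', by rw [g.trans_apply, hgx, hgx'], by rw [← hg', ← hg, ← image_comp]; rfl⟩

theorem cluster_eq_inter_closedBall (hYX : Y ⊆ X) (hY : cluster X x ρ ⊆ Y) :
    cluster X x ρ = Y ∩ closedBall x ρ :=
  Subset.antisymm (fun _ hz => ⟨hY hz, hz.2⟩) fun _ hz => ⟨hYX hz.1, hz.2⟩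

theorem ClustersEquiv.of_image_eq (g : V ≃ᵢ V) (hgx : g x = x') (hg : g '' Y = Y')
    (hYX : Y ⊆ X) (hY'X : Y' ⊆ X) (hY : cluster X x ρ ⊆ Y) (hY' : cluster X x' ρ ⊆ Y') :
    ClustersEquiv X x x' ρ :=
  ⟨g, hgx, by rw [cluster_eq_inter_closedBall hYX hY, cluster_eq_inter_closedBall hY'X hY',
    image_inter g.injective, hg, g.image_closedBall, hgx]⟩

end Clusters

theorem Equivalence.rel_of_forall_rel_add_one {α : Type*} {r : α → α → Prop}
    (hr : Equivalence r) {f : ℤ → α} (h : ∀ p, r (f p) (f (p + 1))) (p q : ℤ) : r (f p) (f q) := by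
  refine Int.inductionOn' q p (hr.refl _) (fun q _ ih => hr.trans ih (h q)) fun q _ ih => ?_
  exact hr.trans ih (hr.symm (by simpa using h (q - 1)))

theorem Int.eq_of_forall_add_one_eq {α : Type*} {F : ℤ → α} {lo hi : ℤ}
    (h : ∀ t, lo ≤ t → t < hi → F (t + 1) = F t) {s t : ℤ} (hs : s ∈ Icc lo hi)
    (ht : t ∈ Icc lo hi) : F s = F t := by
  have key : ∀ t ∈ Icc lo hi, F t = F lo := by
    rintro t ⟨hlo, hhi⟩
    induction t, hlo using Int.leInduction with
    | base => rfl
    | succ t hlt ih => rw [h t hlt (by omega), ih (by omega)]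
  rw [key s hs, key t ht]

namespace EngelSeq

variable {d : ℕ} {A : ℤ → ℤ}

theorem two_le (hA : EngelSeq d A) : 2 ≤ d := by
  have := hA.1 0
  omega

theorem natAbs_periodic (hA : EngelSeq d A) :
    Function.Periodic (fun i => (A i).natAbs) ((d : ℤ) - 1) :=
  hA.2.1

theorem range_natAbs (hA : EngelSeq d A) : range (fun i => (A i).natAbs) = Icc 1 (d - 1) := by
  refine Subset.antisymm (range_subset_iff.2 fun i => hA.1 i) fun s ⟨h1, h2⟩ => ?_
  obtain ⟨i, -, -, hi⟩ := hA.2.2 s h1 h2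
  exact ⟨i, hi⟩

theorem bijOn_natAbs (hA : EngelSeq d A) (c : ℤ) :
    BijOn (fun i => (A i).natAbs) (Ioc c (c + (d - 1))) (Icc 1 (d - 1)) := by
  have hd := hA.two_le
  have himage : (fun i => (A i).natAbs) '' Ioc c (c + (d - 1)) = Icc 1 (d - 1) := by
    rw [hA.natAbs_periodic.image_Ioc (by omega), hA.range_natAbs]
  refine ⟨himage ▸ mapsTo_image _ _, ?_, himage.ge⟩
  rw [← Set.ncard_image_iff (finite_Ioc _ _), himage, ncard_Icc_nat, ← Finset.coe_Ioc,
    ncard_coe_finset, Int.card_Ioc]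
  omega

end EngelSeq

section Drift

variable {d : ℕ} {A : ℤ → ℤ}

theorem engelCum_succ (i : ℤ) :
    engelCum d A (i + 1) = engelCum d A i + engelU d A (i + 1) := by
  rcases lt_trichotomy i (-1) with hi | rfl | hi
  · rw [engelCum, engelCum, if_neg (by omega), if_neg (by omega),
      show (-i).toNat = (-(i + 1)).toNat + 1 by omega, Finset.sum_range_succ,
      show ((-(i + 1)).toNat : ℤ) = -(i + 1) by omega, neg_neg]
    abel
  · simp [engelCum]
  · rw [engelCum, engelCum, if_pos (by omega), if_pos (by omega),
      show (i + 1).toNat = i.toNat + 1 by omega, Finset.sum_range_succ,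
      show (i.toNat : ℤ) = i by omega]

variable {F : Type*} [FunLike F (Euc d) (Euc d)] {p : ℤ}

theorem map_engelCum_sub_eq [AddMonoidHomClass F (Euc d) (Euc d)] (L : F)
    (hL : ∀ i, p - d + 2 ≤ 2 * i → 2 * i ≤ p + d - 1 →
      L (engelU d A i) = -engelU d A (p + 1 - i))
    {t : ℤ} (ht : |t| ≤ d - 1) :
    L (engelCum d A ((p + t) / 2)) - engelCum d A ((p + 1 - t) / 2) =
      L (engelCum d A (p / 2)) - engelCum d A ((p + 1) / 2) := by
  have step : ∀ t, -((d : ℤ) - 1) ≤ t → t < d - 1 →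
      L (engelCum d A ((p + (t + 1)) / 2)) - engelCum d A ((p + 1 - (t + 1)) / 2) =
        L (engelCum d A ((p + t) / 2)) - engelCum d A ((p + 1 - t) / 2) := by
    intro t hlo hhi
    -- both floors change together, exactly when `p + t` is odd
    rcases Int.even_or_odd (p + t) with ⟨k, hk⟩ | ⟨k, hk⟩
    · rw [show (p + (t + 1)) / 2 = (p + t) / 2 by omega,
        show (p + 1 - (t + 1)) / 2 = (p + 1 - t) / 2 by omega]
    · have hu := hL (k + 1) (by omega) (by omega)
      have h1 := engelCum_succ (d := d) (A := A) k
      have h2 := engelCum_succ (d := d) (A := A) (p - k - 1)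
      rw [show (p + (t + 1)) / 2 = k + 1 by omega, show (p + t) / 2 = k by omega,
        show (p + 1 - (t + 1)) / 2 = p - k - 1 by omega,
        show (p + 1 - t) / 2 = p - k - 1 + 1 by omega, h1, h2, map_add, hu,
        show p + 1 - (k + 1) = p - k - 1 + 1 by omega]
      abel
  rw [abs_le] at ht
  simpa using Int.eq_of_forall_add_one_eq
    (F := fun t => L (engelCum d A ((p + t) / 2)) - engelCum d A ((p + 1 - t) / 2))
    step (s := t) (t := 0) ⟨ht.1, ht.2⟩ ⟨by omega, by omega⟩

theorem map_engelOffset_sub_eq [LinearMapClass F ℝ (Euc d) (Euc d)] (L : F)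
    (he : L (eVec d d) = -eVec d d)
    (hL : ∀ i, p - d + 2 ≤ 2 * i → 2 * i ≤ p + d - 1 →
      L (engelU d A i) = -engelU d A (p + 1 - i))
    (b δ : ℝ) {t : ℤ} (ht : |t| ≤ d - 1) :
    L (engelOffset d A b δ (p + t)) - engelOffset d A b δ (p + 1 - t) =
      L (engelOffset d A b δ p) - engelOffset d A b δ (p + 1) := by
  have hC := map_engelCum_sub_eq L hL ht
  simp only [engelOffset, map_add, map_smul, he]
  push_cast
  linear_combination (norm := module) δ • hC

end Drift

theorem image_add_vadd_addSubgroup {E G : Type*} [AddCommGroup E] [EquivLike G E E]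
    [AddEquivClass G E E] {Y : AddSubgroup E} (L : G) (hL : ∀ y, L y ∈ Y ↔ y ∈ Y)
    {v v' w : E} (h : L v + w - v' ∈ Y) :
    (fun x => L x + w) '' (v +ᵥ (Y : Set E)) = v' +ᵥ (Y : Set E) := by
  ext z
  simp only [mem_image, mem_vadd_set, SetLike.mem_coe, vadd_eq_add]
  constructor
  · rintro ⟨_, ⟨y, hy, rfl⟩, rfl⟩
    refine ⟨L y + (L v + w - v'), Y.add_mem ((hL y).2 hy) h, ?_⟩
    rw [map_add]
    abel
  · rintro ⟨y, hy, rfl⟩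
    obtain ⟨x, hx⟩ := EquivLike.surjective L (y - (L v + w - v'))
    refine ⟨v + x, ⟨x, (hL x).1 (hx ▸ Y.sub_mem hy h), rfl⟩, ?_⟩
    rw [map_add, hx]
    abel

def engelGridSubgroup (d : ℕ) (a : ℝ) : AddSubgroup (Euc d) where
  carrier := engelGrid d a
  zero_mem' j := ⟨fun _ => ⟨0, by simp⟩, fun _ => rfl⟩
  add_mem' {x y} hx hy j := by
    refine ⟨fun hj => ?_, fun hj => by simp [(hx j).2 hj, (hy j).2 hj]⟩
    obtain ⟨m, hm⟩ := (hx j).1 hj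
    obtain ⟨n, hn⟩ := (hy j).1 hj
    exact ⟨m + n, by simp [hm, hn]; ring⟩
  neg_mem' {x} hx j := by
    refine ⟨fun hj => ?_, fun hj => by simp [(hx j).2 hj]⟩
    obtain ⟨m, hm⟩ := (hx j).1 hj
    exact ⟨-m, by simp [hm]⟩

theorem mem_engelLayer_iff {d : ℕ} {A : ℤ → ℤ} {a b δ : ℝ} {m : ℤ} {x : Euc d} :
    x ∈ engelLayer d A a b δ m ↔ x - engelOffset d A b δ m ∈ engelGrid d a := by
  rw [engelLayer, mem_vadd_set_iff_neg_vadd_mem, vadd_eq_add, neg_add_eq_sub]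

theorem engelOffset_mem_engelLayer (d : ℕ) (A : ℤ → ℤ) (a b δ : ℝ) (m : ℤ) :
    engelOffset d A b δ m ∈ engelLayer d A a b δ m := by
  rw [mem_engelLayer_iff, sub_self]
  exact (engelGridSubgroup d a).zero_mem

section SignedPerm

variable {ι : Type*} [Fintype ι] (σ : Equiv.Perm ι) (ε : ι → ℝ)
  (hε : ∀ k, ε k = 1 ∨ ε k = -1)

def signedPerm : EuclideanSpace ℝ ι ≃ₗᵢ[ℝ] EuclideanSpace ℝ ι where
  toFun x := WithLp.toLp 2 fun j => ε (σ.symm j) * x (σ.symm j)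
  invFun y := WithLp.toLp 2 fun k => ε k * y (σ k)
  map_add' x y := by ext j; simp [mul_add]
  map_smul' c x := by ext j; simp; ring
  left_inv x := by ext k; simp [← mul_assoc, mul_self_eq_one_iff.2 (hε _)]
  right_inv y := by ext j; simp [← mul_assoc, mul_self_eq_one_iff.2 (hε _)]
  norm_map' x := by
    simp only [LinearEquiv.coe_mk, LinearMap.coe_mk, AddHom.coe_mk, EuclideanSpace.norm_eq]
    congr 1
    rw [← Equiv.sum_comp σ]
    refine Finset.sum_congr rfl fun k _ => ?_
    rcases hε k with h | h <;> simp [h]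

variable {σ ε hε}

theorem signedPerm_apply (x : EuclideanSpace ℝ ι) (k : ι) :
    signedPerm σ ε hε x (σ k) = ε k * x k := by
  simp [signedPerm]

theorem signedPerm_single [DecidableEq ι] (k : ι) (c : ℝ) :
    signedPerm σ ε hε (EuclideanSpace.single k c) = EuclideanSpace.single (σ k) (ε k * c) := by
  ext j
  obtain ⟨i, rfl⟩ := σ.surjective j
  rw [signedPerm_apply]
  by_cases h : i = k <;> simp [h]

theorem forall_signedPerm_apply_iff {P : ι → ℝ → Prop} (hneg : ∀ j s, P j (-s) ↔ P j s)
    (hσ : ∀ k s, P (σ k) s ↔ P k s) (x : EuclideanSpace ℝ ι) :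
    (∀ j, P j (signedPerm σ ε hε x j)) ↔ ∀ k, P k (x k) := by
  rw [← σ.forall_congr_right]
  refine forall_congr' fun k => ?_
  rw [signedPerm_apply, hσ]
  rcases hε k with h | h <;> simp [h, hneg]

end SignedPerm

theorem signedPerm_mem_engelGrid_iff {d : ℕ} {σ : Equiv.Perm (Fin d)} {ε : Fin d → ℝ}
    {hε : ∀ k, ε k = 1 ∨ ε k = -1} (hσ : ∀ j, (σ j : ℕ) < d - 1 ↔ (j : ℕ) < d - 1)
    (a : ℝ) (y : Euc d) : signedPerm σ ε hε y ∈ engelGrid d a ↔ y ∈ engelGrid d a := by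
  have hneg : ∀ t : ℝ, (∃ m : ℤ, -t = 2 * a * m) → ∃ m : ℤ, t = 2 * a * m :=
    fun t ⟨m, hm⟩ => ⟨-m, by push_cast; linarith⟩
  refine forall_signedPerm_apply_iff
    (P := fun (j : Fin d) t =>
      ((j : ℕ) < d - 1 → ∃ m : ℤ, t = 2 * a * m) ∧ ((j : ℕ) = d - 1 → t = 0))
    (fun j t => and_congr
      (imp_congr_right fun _ => ⟨hneg t, fun h => hneg (-t) (by simpa using h)⟩)
      (imp_congr_right fun _ => neg_eq_zero)) (fun k t => ?_) y
  have hlast : (σ k : ℕ) = d - 1 ↔ (k : ℕ) = d - 1 := by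
    have := hσ k; have := (σ k).isLt; have := k.isLt; omega
  simp only [hσ, hlast]

theorem exists_perm_fin_of_injOn {d : ℕ} {π : ℕ → ℕ}
    (hmaps : MapsTo π (Icc 1 (d - 1)) (Icc 1 (d - 1))) (hinj : InjOn π (Icc 1 (d - 1))) :
    ∃ σ : Equiv.Perm (Fin d), (∀ j, (σ j : ℕ) < d - 1 ↔ (j : ℕ) < d - 1) ∧
      ∀ j : Fin d, (j : ℕ) < d - 1 → (σ j : ℕ) = π (j + 1) - 1 := by
  have hπ : ∀ j < d - 1, π (j + 1) - 1 < d - 1 ∧ 1 ≤ π (j + 1) := fun j hj => by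
    have := hmaps (⟨by omega, by omega⟩ : j + 1 ∈ Icc 1 (d - 1))
    simp only [mem_Icc] at this
    omega
  let τ : Fin d → Fin d := fun j =>
    if hj : (j : ℕ) < d - 1 then ⟨π (j + 1) - 1, by have := hπ j hj; omega⟩ else j
  have hτ_lt : ∀ j : Fin d, ((τ j : ℕ) < d - 1 ↔ (j : ℕ) < d - 1) := fun j => by
    by_cases hj : (j : ℕ) < d - 1 <;> simp [τ, hj, hπ]
  have hτ_inj : Function.Injective τ := fun j j' h => by
    by_cases hj : (j : ℕ) < d - 1 <;> by_cases hj' : (j' : ℕ) < d - 1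
    · have h' : π (j + 1) = π (j' + 1) := by
        have := congrArg Fin.val h
        simp only [τ, hj, hj', dite_true] at this
        have := hπ j hj; have := hπ j' hj'
        omega
      have := hinj (⟨by omega, by omega⟩ : (j : ℕ) + 1 ∈ Icc 1 (d - 1))
        (⟨by omega, by omega⟩ : (j' : ℕ) + 1 ∈ Icc 1 (d - 1)) h'
      exact Fin.ext (by omega)
    · exact absurd ((hτ_lt j').1 (h ▸ (hτ_lt j).2 hj)) hj'
    · exact absurd ((hτ_lt j).1 (h ▸ (hτ_lt j').2 hj')) hj
    · simpa [τ, hj, hj'] using h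
  exact ⟨Equiv.ofBijective τ (Finite.injective_iff_bijective.mp hτ_inj), hτ_lt,
    fun j hj => by simp [τ, hj]⟩

theorem exists_linearIsometryEquiv_eVec {d : ℕ} {π : ℕ → ℕ}
    (hmaps : MapsTo π (Icc 1 (d - 1)) (Icc 1 (d - 1))) (hinj : InjOn π (Icc 1 (d - 1)))
    (s : ℕ → ℝ) (hs : ∀ k, s k = 1 ∨ s k = -1) :
    ∃ L : Euc d ≃ₗᵢ[ℝ] Euc d, (∀ a y, L y ∈ engelGrid d a ↔ y ∈ engelGrid d a) ∧
      L (eVec d d) = -eVec d d ∧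
      ∀ k ∈ Icc 1 (d - 1), L (eVec d k) = s k • eVec d (π k) := by
  obtain ⟨σ, hσ_lt, hσ⟩ := exists_perm_fin_of_injOn hmaps hinj
  let ε : Fin d → ℝ := fun j => if (j : ℕ) < d - 1 then s (j + 1) else -1
  have hε : ∀ j, ε j = 1 ∨ ε j = -1 := fun j => by
    by_cases hj : (j : ℕ) < d - 1 <;> simp [ε, hj, hs]
  refine ⟨signedPerm σ ε hε, signedPerm_mem_engelGrid_iff hσ_lt, ?_,
    fun k ⟨hk1, hk2⟩ => ?_⟩
  · unfold eVec
    split_ifs with hd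
    · have hlast : σ ⟨d - 1, hd⟩ = ⟨d - 1, hd⟩ := by
        have h1 := hσ_lt ⟨d - 1, hd⟩
        have h2 := (σ ⟨d - 1, hd⟩).isLt
        simp only [lt_self_iff_false, iff_false, not_lt] at h1
        exact Fin.ext (by simp only; omega)
      rw [signedPerm_single, hlast]
      ext j
      by_cases hj : j = ⟨d - 1, hd⟩ <;> simp [ε, hj]
    · simp
  · obtain ⟨hπ1, hπ2⟩ := hmaps ⟨hk1, hk2⟩
    have hk : σ ⟨k - 1, by omega⟩ = ⟨π k - 1, by omega⟩ :=
      Fin.ext ((hσ _ (by simp; omega)).trans (by simp [show k - 1 + 1 = k by omega]))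
    rw [eVec, eVec, dif_pos (by omega), dif_pos (by omega), signedPerm_single, hk]
    ext j
    by_cases hj : j = ⟨π k - 1, by omega⟩ <;>
      simp [ε, hj, show k - 1 < d - 1 by omega, show k - 1 + 1 = k by omega]

theorem EngelSeq.exists_linearIsometryEquiv_reflect {d : ℕ} {A : ℤ → ℤ} (hA : EngelSeq d A)
    (p : ℤ) :
    ∃ L : Euc d ≃ₗᵢ[ℝ] Euc d, (∀ a y, L y ∈ engelGrid d a ↔ y ∈ engelGrid d a) ∧
      L (eVec d d) = -eVec d d ∧
      ∀ i, p - d + 2 ≤ 2 * i → 2 * i ≤ p + d - 1 →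
        L (engelU d A i) = -engelU d A (p + 1 - i) := by
  -- `Ioc c (c + (d - 1))` is exactly the set of `i` with `p - d + 2 ≤ 2 * i ≤ p + d - 1`.
  set c := (p - d + 1) / 2
  have hW := hA.bijOn_natAbs c
  have hW' := hA.bijOn_natAbs (p - c - (d - 1))
  set idx := Function.invFunOn (fun i => (A i).natAbs) (Ioc c (c + (d - 1)))
  have hrefl : MapsTo (fun i => p + 1 - i) (Ioc c (c + (d - 1))) (Ioc (p - c - (d - 1))
      (p - c - (d - 1) + (d - 1))) := fun i hi => by simp only [mem_Ioc] at hi ⊢; omega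
  have hrefl_inj : InjOn (fun i : ℤ => p + 1 - i) (Ioc c (c + (d - 1))) :=
    fun i _ j _ h => by simpa using h
  have hidx_maps := hW.surjOn.mapsTo_invFunOn
  let sgn : ℤ → ℝ := fun i => if 0 < A i then 1 else -1
  have hsgn : ∀ i, sgn i * sgn i = 1 := fun i => by by_cases h : 0 < A i <;> simp [sgn, h]
  obtain ⟨L, hgrid, hlast, hL⟩ := exists_linearIsometryEquiv_eVec
    (π := fun k => (A (p + 1 - idx k)).natAbs)
    (hW'.mapsTo.comp (hrefl.comp hidx_maps))
    (hW'.injOn.comp (hrefl_inj.comp hW.surjOn.rightInvOn_invFunOn.injOn hidx_maps)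
      (hrefl.comp hidx_maps))
    (fun k => -(sgn (idx k) * sgn (p + 1 - idx k)))
    (fun k => by
      by_cases h : 0 < A (idx k) <;> by_cases h' : 0 < A (p + 1 - idx k) <;> simp [sgn, h, h'])
  refine ⟨L, hgrid, hlast, fun i h1 h2 => ?_⟩
  have hi : i ∈ Ioc c (c + (d - 1)) := ⟨by omega, by omega⟩
  have hidx : idx (A i).natAbs = i := hW.injOn.leftInvOn_invFunOn hi
  rw [engelU, map_smul, hL _ (hW.mapsTo hi), hidx, smul_smul, engelU, ← neg_smul]
  change (sgn i * -(sgn i * sgn (p + 1 - i))) • _ = (-sgn (p + 1 - i)) • _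
  congr 1
  linear_combination -sgn (p + 1 - i) * hsgn i

def engelSlab (d : ℕ) (A : ℤ → ℤ) (a b δ : ℝ) (p : ℤ) : Set (Euc d) :=
  ⋃ l ∈ Icc (p - ((d : ℤ) - 1)) (p + ((d : ℤ) - 1)), engelLayer d A a b δ l

theorem engelSlab_subset_engelSet (d : ℕ) (A : ℤ → ℤ) (a b δ : ℝ) (p : ℤ) :
    engelSlab d A a b δ p ⊆ engelSet d A a b δ :=
  iUnion₂_subset fun l _ => subset_iUnion (engelLayer d A a b δ) l

namespace EngelSeq

variable {d : ℕ} {A : ℤ → ℤ}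

theorem exists_isometryEquiv_reflect (hA : EngelSeq d A) (a b δ : ℝ) (p : ℤ) :
    ∃ g : Euc d ≃ᵢ Euc d, g (engelOffset d A b δ p) = engelOffset d A b δ (p + 1) ∧
      ∀ t : ℤ, |t| ≤ d - 1 →
        g '' engelLayer d A a b δ (p + t) = engelLayer d A a b δ (p + 1 - t) := by
  obtain ⟨L, hgrid, hlast, hL⟩ := hA.exists_linearIsometryEquiv_reflect p
  set w := engelOffset d A b δ (p + 1) - L (engelOffset d A b δ p)
  refine ⟨L.toIsometryEquiv.trans (IsometryEquiv.addRight w), by simp [w], fun t ht => ?_⟩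
  have hw : L (engelOffset d A b δ (p + t)) + w - engelOffset d A b δ (p + 1 - t) = 0 :=
    calc _ = (L (engelOffset d A b δ (p + t)) - engelOffset d A b δ (p + 1 - t)) -
          (L (engelOffset d A b δ p) - engelOffset d A b δ (p + 1)) := by simp only [w]; abel
      _ = 0 := sub_eq_zero.2 (map_engelOffset_sub_eq L hlast hL b δ ht)
  exact image_add_vadd_addSubgroup (Y := engelGridSubgroup d a) (w := w) L (hgrid a)
    (hw ▸ zero_mem _)

theorem exists_isometryEquiv_engelSlab (hA : EngelSeq d A) (a b δ : ℝ) (p : ℤ) :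
    ∃ g : Euc d ≃ᵢ Euc d, g (engelOffset d A b δ p) = engelOffset d A b δ (p + 1) ∧
      g '' engelSlab d A a b δ p = engelSlab d A a b δ (p + 1) := by
  obtain ⟨g, hg0, hg⟩ := hA.exists_isometryEquiv_reflect a b δ p
  refine ⟨g, hg0, ?_⟩
  ext z
  simp only [engelSlab, image_iUnion₂, mem_iUnion, mem_Icc, exists_prop]
  constructor
  · rintro ⟨l, hl, hz⟩
    rw [show l = p + (l - p) by ring, hg _ (abs_le.2 ⟨by omega, by omega⟩)] at hz
    exact ⟨_, ⟨by omega, by omega⟩, hz⟩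
  · rintro ⟨l, hl, hz⟩
    rw [show l = p + 1 - (p + 1 - l) by ring, ← hg _ (abs_le.2 ⟨by omega, by omega⟩)] at hz
    exact ⟨_, ⟨by omega, by omega⟩, hz⟩

end EngelSeq

theorem clustersEquiv_of_mem_engelLayer {d : ℕ} {A : ℤ → ℤ} {a b δ ρ : ℝ} {m : ℤ}
    {x x' : Euc d} (hx : x ∈ engelLayer d A a b δ m) (hx' : x' ∈ engelLayer d A a b δ m) :
    ClustersEquiv (engelSet d A a b δ) x x' ρ := by
  have hv : x' - x ∈ engelGridSubgroup d a := by
    rw [← sub_sub_sub_cancel_right x' x (engelOffset d A b δ m)]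
    exact sub_mem (mem_engelLayer_iff.1 hx') (mem_engelLayer_iff.1 hx)
  have hX : IsometryEquiv.addRight (x' - x) '' engelSet d A a b δ = engelSet d A a b δ := by
    refine image_iUnion.trans (iUnion_congr fun l => ?_)
    refine image_add_vadd_addSubgroup (Y := engelGridSubgroup d a) (AddEquiv.refl _)
      (fun _ => Iff.rfl) ?_
    simpa using hv
  exact ClustersEquiv.of_image_eq _ (by simp) hX subset_rfl subset_rfl inter_subset_left
    inter_subset_left

theorem engelSet_clusters_equiv_of_local_general (d : ℕ) (A : ℤ → ℤ)
    (hA : EngelSeq d A) (a b δ : ℝ)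
    (ρ : ℝ)
    (hloc : ∀ (p : ℤ) (x : Euc d), x ∈ engelLayer d A a b δ p →
      cluster (engelSet d A a b δ) x ρ ⊆
        ⋃ l ∈ Set.Icc (p - ((d : ℤ) - 1)) (p + ((d : ℤ) - 1)), engelLayer d A a b δ l) :
    ∀ x ∈ engelSet d A a b δ, ∀ x' ∈ engelSet d A a b δ,
      ClustersEquiv (engelSet d A a b δ) x x' ρ := by
  have hE := clustersEquiv_equivalence (engelSet d A a b δ) ρ
  have hstep : ∀ p, ClustersEquiv (engelSet d A a b δ) (engelOffset d A b δ p)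
      (engelOffset d A b δ (p + 1)) ρ := fun p => by
    obtain ⟨g, hg0, hg⟩ := hA.exists_isometryEquiv_engelSlab a b δ p
    exact .of_image_eq g hg0 hg (engelSlab_subset_engelSet ..) (engelSlab_subset_engelSet ..)
      (hloc p _ (engelOffset_mem_engelLayer ..)) (hloc (p + 1) _ (engelOffset_mem_engelLayer ..))
  intro x hx x' hx'
  obtain ⟨m, hm⟩ := mem_iUnion.1 hx
  obtain ⟨m', hm'⟩ := mem_iUnion.1 hx'
  exact hE.trans (hE.trans (clustersEquiv_of_mem_engelLayer hm (engelOffset_mem_engelLayer ..))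
    (hE.rel_of_forall_rel_add_one hstep m m')) (clustersEquiv_of_mem_engelLayer
      (engelOffset_mem_engelLayer ..) hm')

/-- Lemma 5.1: if every `ρ`-cluster of an Engel set centered in layer `X_p`
contains only points of the layers `X_l` with `|l - p| ≤ d-1`, then all `ρ`-clusters are
mutually equivalent, i.e. `N_X(ρ) = 1`. -/
theorem engelSet_clusters_equiv_of_local (d : ℕ) (hd : 2 ≤ d) (A : ℤ → ℤ)
    (hA : EngelSeq d A) (a b δ : ℝ) (ha : 0 < a) (hab : a < b) (hδ : 0 < δ)
    (ρ : ℝ) (hρ : 0 < ρ)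
    (hloc : ∀ (p : ℤ) (x : Euc d), x ∈ engelLayer d A a b δ p →
      cluster (engelSet d A a b δ) x ρ ⊆
        ⋃ l ∈ Set.Icc (p - ((d : ℤ) - 1)) (p + ((d : ℤ) - 1)), engelLayer d A a b δ l) :
    ∀ x ∈ engelSet d A a b δ, ∀ x' ∈ engelSet d A a b δ,
      ClustersEquiv (engelSet d A a b δ) x x' ρ :=
  engelSet_clusters_equiv_of_local_general d A hA a b δ ρ hloc
end
end
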